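/- arXiv:1904.01047 — 6 statements merged into one kernel-verified Lean document; each statement's English description precedes it below -/
import Mathlib

section
/- Let T > 0, let 𝒵 ⊆ ℝ be open, set 𝒰 := 𝒵 × (0, T) and Γ := (∂𝒵 × [0, T]) ∪ (𝒵̄ × {0}). Suppose H : ℝ² × ℝ × ℝ → ℝ satisfies conditions (R1)–(R3). Let u, v : ℝ² → ℝ be bounded and uniformly continuous on 𝒰̄, with u a viscosity subsolution and v a viscosity supersolution on 𝒰 of ∂_t f + H((z,t), f, ∂_z f) = 0 (i.e., of F = 0 with F((z,t), q, (p_z, p_t)) := p_t + H((z,t), q, p_z)). Then sup_{(z,t) ∈ 𝒰̄} (u(z,t) − v(z,t))₊ ≤ sup_{(z,t) ∈ Γ} (u(z,t) − v(z,t))₊, where (a)₊ := max{a, 0}. -/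
open Set Filter

/-- `u` is a viscosity subsolution of `F (y, u y, Du y) = 0` on the open set `U ⊆ ℝ²`. -/
def IsViscositySubsolnOn (F : (ℝ × ℝ) → ℝ → (ℝ × ℝ) → ℝ) (u : ℝ × ℝ → ℝ)
    (U : Set (ℝ × ℝ)) : Prop :=
  ContinuousOn u U ∧
    ∀ φ : (ℝ × ℝ) → ℝ, ContDiff ℝ 2 φ → ∀ y ∈ U,
      IsLocalMax (fun p => u p - φ p) y →
        F y (u y) (fderiv ℝ φ y (1, 0), fderiv ℝ φ y (0, 1)) ≤ 0

/-- `u` is a viscosity supersolution of `F (y, u y, Du y) = 0` on the open set `U ⊆ ℝ²`. -/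
def IsViscositySupersolnOn (F : (ℝ × ℝ) → ℝ → (ℝ × ℝ) → ℝ) (u : ℝ × ℝ → ℝ)
    (U : Set (ℝ × ℝ)) : Prop :=
  ContinuousOn u U ∧
    ∀ φ : (ℝ × ℝ) → ℝ, ContDiff ℝ 2 φ → ∀ y ∈ U,
      IsLocalMin (fun p => u p - φ p) y →
        0 ≤ F y (u y) (fderiv ℝ φ y (1, 0), fderiv ℝ φ y (0, 1))

/-- A modulus of continuity: nondecreasing, nonnegative on `[0,∞)`, `ω 0 = 0`,
and `ω s → 0` as `s → 0⁺`. -/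
def IsModulus (ω : ℝ → ℝ) : Prop :=
  Monotone ω ∧ ω 0 = 0 ∧ (∀ s, 0 ≤ s → 0 ≤ ω s) ∧
    Tendsto ω (nhdsWithin 0 (Ioi 0)) (nhds 0)

/-- Conditions (R1)–(R2) on a Hamiltonian `H (y, u, p)` with `y ∈ ℝ²`, `u p ∈ ℝ`. -/
def SatisfiesR1R2 (H : (ℝ × ℝ) → ℝ → ℝ → ℝ) : Prop :=
  UniformContinuous (fun x : (ℝ × ℝ) × ℝ × ℝ => H x.1 x.2.1 x.2.2) ∧
    ∃ ω : ℝ → ℝ, IsModulus ω ∧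
      (∀ (y₁ y₂ : ℝ × ℝ) (u p₁ p₂ : ℝ),
        |H y₁ u p₁ - H y₂ u p₂| ≤ ω (‖y₁ - y₂‖ + |p₁ - p₂|)) ∧
      (∀ (y₁ y₂ : ℝ × ℝ) (u p : ℝ),
        |H y₁ u p - H y₂ u p| ≤ ω (‖y₁ - y₂‖ * (1 + |p|)))

/-- Condition (R3): `H (y, u, p)` is non-decreasing in `u`. -/
def SatisfiesR3 (H : (ℝ × ℝ) → ℝ → ℝ → ℝ) : Prop :=
  ∀ (y : ℝ × ℝ) (p : ℝ), Monotone fun u => H y u p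

/-!
Doubling of variables. If `u - v` exceeded its supremum `S` over `Γ` at a point `x₀` of `𝒰`, so
would `u - v - η / (T - t)` for small `η > 0`, and
`Φ (x, y) = u x - v y - η / (T - x.2) - |x - y|² / ε - δ |x - x₀|²`
attains its maximum over pairs with `x.2 < T`: the barrier keeps `x` away from `t = T` and the last
term makes the superlevel sets of `Φ` compact. For small `ε` the points `x` and `y` are close, so by
uniform continuity neither lies on `Γ`. Testing the subsolution at `x` and the supersolution at `y`
with the smooth parts of `Φ` and subtracting, (R2) and (R3) bound the time derivative
`η / (T - x.2)² ≥ η / T²` of the barrier by `δ`- and `ω`-terms which are small for small `ε`, `δ`: a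
contradiction. Finally `u - v ≤ S` passes from `𝒰` to its closure by continuity.
-/

open Topology

-- The norm of `ℝ × ℝ` is the sup norm, whose square is not smooth.
def sqDist (x y : ℝ × ℝ) : ℝ := (x.1 - y.1) ^ 2 + (x.2 - y.2) ^ 2

lemma sqDist_nonneg (x y : ℝ × ℝ) : 0 ≤ sqDist x y := by
  unfold sqDist; positivity

lemma sqDist_self (x : ℝ × ℝ) : sqDist x x = 0 := by
  simp [sqDist]

lemma sqDist_comm (x y : ℝ × ℝ) : sqDist x y = sqDist y x := by
  unfold sqDist; ring

lemma norm_sub_sq_le_sqDist (x y : ℝ × ℝ) : ‖x - y‖ ^ 2 ≤ sqDist x y := by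
  rw [Prod.norm_def, sqDist]
  simp only [Prod.fst_sub, Prod.snd_sub, Real.norm_eq_abs]
  rcases le_total |x.1 - y.1| |x.2 - y.2| with h | h
  · rw [max_eq_right h, sq_abs]; nlinarith [sq_nonneg (x.1 - y.1)]
  · rw [max_eq_left h, sq_abs]; nlinarith [sq_nonneg (x.2 - y.2)]

lemma dist_le_sqrt_sqDist (x y : ℝ × ℝ) : dist x y ≤ √(sqDist x y) :=
  Real.le_sqrt_of_sq_le (dist_eq_norm x y ▸ norm_sub_sq_le_sqDist x y)

@[fun_prop]
lemma Continuous.sqDist {α : Type*} [TopologicalSpace α] {f g : α → ℝ × ℝ} (hf : Continuous f)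
    (hg : Continuous g) : Continuous fun a => _root_.sqDist (f a) (g a) := by
  unfold _root_.sqDist; fun_prop

lemma contDiff_sqDist {n : WithTop ℕ∞} (c : ℝ × ℝ) : ContDiff ℝ n fun x => sqDist x c := by
  unfold sqDist; fun_prop

lemma hasFDerivAt_sqDist (x c : ℝ × ℝ) :
    HasFDerivAt (fun x => sqDist x c)
      ((2 * (x.1 - c.1)) • ContinuousLinearMap.fst ℝ ℝ ℝ
        + (2 * (x.2 - c.2)) • ContinuousLinearMap.snd ℝ ℝ ℝ) x := by
  have h₁ := (((hasDerivAt_id x.1).sub_const c.1).pow 2).comp_hasFDerivAt x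
    (hasFDerivAt_fst (𝕜 := ℝ) (p := x))
  have h₂ := (((hasDerivAt_id x.2).sub_const c.2).pow 2).comp_hasFDerivAt x
    (hasFDerivAt_snd (𝕜 := ℝ) (p := x))
  exact (h₁.add h₂).congr_fderiv (by simp)

lemma isCompact_setOf_sqDist_le (x₀ : ℝ × ℝ) (r r' : ℝ) :
    IsCompact {w : (ℝ × ℝ) × (ℝ × ℝ) | sqDist w.1 x₀ ≤ r ∧ sqDist w.1 w.2 ≤ r'} := by
  refine Metric.isCompact_of_isClosed_isBounded ?_ ?_
  · exact (isClosed_le (continuous_fst.sqDist continuous_const) continuous_const).inter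
      (isClosed_le (continuous_fst.sqDist continuous_snd) continuous_const)
  · refine ((Metric.isBounded_closedBall (x := x₀) (r := √r)).prod
      (Metric.isBounded_closedBall (x := x₀) (r := √r' + √r))).subset ?_
    rintro ⟨x, y⟩ ⟨hx, hxy⟩
    have h₁ : dist x x₀ ≤ √r := (dist_le_sqrt_sqDist x x₀).trans (Real.sqrt_le_sqrt hx)
    have h₂ : dist x y ≤ √r' := (dist_le_sqrt_sqDist x y).trans (Real.sqrt_le_sqrt hxy)
    exact ⟨h₁, (dist_triangle y x x₀).trans (by rw [dist_comm y x]; linarith)⟩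

lemma div_le_tangent_add_sq {η a b : ℝ} (hη : 0 ≤ η) (ha : 0 < a) (hab : a ≤ 2 * b) :
    η / b ≤ η / a + η / a ^ 2 * (a - b) + 2 * η / a ^ 3 * (a - b) ^ 2 := by
  have hb : 0 < b := by linarith
  have key : η / a + η / a ^ 2 * (a - b) + 2 * η / a ^ 3 * (a - b) ^ 2 - η / b
      = η * (a - b) ^ 2 * (2 * b - a) / (a ^ 3 * b) := by
    field_simp; ring
  have : 0 ≤ η * (a - b) ^ 2 * (2 * b - a) / (a ^ 3 * b) := by
    have : 0 ≤ 2 * b - a := by linarith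
    positivity
  linarith

theorem IsViscositySubsolnOn.le_zero_of_isLocalMax_sub_barrier
    {F : (ℝ × ℝ) → ℝ → (ℝ × ℝ) → ℝ} {u : ℝ × ℝ → ℝ} {U : Set (ℝ × ℝ)}
    (hu : IsViscositySubsolnOn F u U) {ψ : ℝ × ℝ → ℝ} (hψ : ContDiff ℝ 2 ψ) {T η : ℝ}
    (hη : 0 ≤ η) {y : ℝ × ℝ} (hy : y ∈ U) (hyT : y.2 < T)
    (hmax : IsLocalMax (fun x => u x - (ψ x + η / (T - x.2))) y) :
    F y (u y) (fderiv ℝ ψ y (1, 0), fderiv ℝ ψ y (0, 1) + η / (T - y.2) ^ 2) ≤ 0 := by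
  set a := T - y.2
  have ha : 0 < a := sub_pos.2 hyT
  -- the barrier is not smooth on all of `ℝ²`; near `y` it lies below this quadratic, which
  -- touches it at `y`
  set q : ℝ → ℝ := fun t => η / a + η / a ^ 2 * (t - y.2) + 2 * η / a ^ 3 * (t - y.2) ^ 2
  have hq : HasDerivAt q (η / a ^ 2) y.2 := by
    have := ((((hasDerivAt_id y.2).sub_const y.2).const_mul (η / a ^ 2)).const_add (η / a)).add
      ((((hasDerivAt_id y.2).sub_const y.2).pow 2).const_mul (2 * η / a ^ 3))
    exact this.congr_deriv (by simp)
  have hφ : HasFDerivAt (fun x => ψ x + q x.2)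
      (fderiv ℝ ψ y + (η / a ^ 2) • ContinuousLinearMap.snd ℝ ℝ ℝ) y :=
    (hψ.differentiable (by norm_num) y).hasFDerivAt.add (hq.comp_hasFDerivAt y hasFDerivAt_snd)
  have hloc : IsLocalMax (fun x => u x - (ψ x + q x.2)) y := by
    have hnear : ∀ᶠ x in 𝓝 y, x.2 < y.2 + a / 2 :=
      (continuous_snd.tendsto y).eventually (Iio_mem_nhds (by linarith))
    filter_upwards [hmax, hnear] with x hx hxa
    have := div_le_tangent_add_sq hη ha (b := T - x.2) (by linarith)
    simp only [q, sub_self, mul_zero, add_zero, zero_pow two_ne_zero]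
    rw [show a - (T - x.2) = x.2 - y.2 by ring] at this
    linarith
  have hφ2 : ContDiff ℝ 2 fun x : ℝ × ℝ => ψ x + q x.2 := by
    simp only [q]; exact hψ.add (by fun_prop)
  simpa [hφ.fderiv] using hu.2 _ hφ2 y hy hloc

theorem IsCompact.exists_isMaxOn_of_superlevel_subset {α β : Type*} [TopologicalSpace α]
    [LinearOrder β] [TopologicalSpace β] [ClosedIciTopology β] {s C : Set α} {f : α → β} {c : β}
    {w₀ : α} (hC : IsCompact C) (hf : ContinuousOn f C) (hw₀ : w₀ ∈ s) (hcw₀ : c ≤ f w₀)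
    (hsuper : ∀ w ∈ s, c ≤ f w → w ∈ C) : ∃ w ∈ C, IsMaxOn f s w := by
  obtain ⟨w, hwC, hw⟩ := hC.exists_isMaxOn ⟨w₀, hsuper w₀ hw₀ hcw₀⟩ hf
  refine ⟨w, hwC, fun w' hw' => ?_⟩
  by_cases hcw' : c ≤ f w'
  · exact hw (hsuper w' hw' hcw')
  · exact (not_le.1 hcw').le.trans (hcw₀.trans (hw (hsuper w₀ hw₀ hcw₀)))

def parabolicBoundary (Z : Set ℝ) (T : ℝ) : Set (ℝ × ℝ) :=
  frontier Z ×ˢ Icc 0 T ∪ closure Z ×ˢ {0}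

lemma parabolicBoundary_subset {Z : Set ℝ} {T : ℝ} (hT : 0 ≤ T) :
    parabolicBoundary Z T ⊆ closure Z ×ˢ Icc 0 T := by
  rintro q (⟨hq₁, hq₂⟩ | ⟨hq₁, hq₂ : q.2 = 0⟩)
  · exact ⟨frontier_subset_closure hq₁, hq₂⟩
  · exact ⟨hq₁, by rw [hq₂]; exact left_mem_Icc.2 hT⟩

lemma closure_prod_Ioo_eq {Z : Set ℝ} {T : ℝ} (hT : 0 < T) :
    closure (Z ×ˢ Ioo 0 T) = closure Z ×ˢ Icc 0 T := by
  rw [closure_prod_eq, closure_Ioo hT.ne]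

lemma mem_prod_Ioo_of_lt {Z : Set ℝ} (hZ : IsOpen Z) {T S : ℝ} {f : ℝ × ℝ → ℝ}
    (hΓ : ∀ q ∈ parabolicBoundary Z T, f q ≤ S) {x : ℝ × ℝ} (hx : x ∈ closure Z ×ˢ Icc 0 T)
    (hxT : x.2 < T) (hSx : S < f x) : x ∈ Z ×ˢ Ioo 0 T := by
  have hxΓ : x ∉ parabolicBoundary Z T := fun h => (hΓ x h).not_gt hSx
  have hx₁ : x.1 ∈ closure Z \ frontier Z := ⟨hx.1, fun h => hxΓ (Or.inl ⟨h, hx.2⟩)⟩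
  rw [closure_sdiff_frontier, hZ.interior_eq] at hx₁
  exact ⟨hx₁, lt_of_le_of_ne hx.2.1 fun h => hxΓ (Or.inr ⟨hx.1, h.symm⟩), hxT⟩

noncomputable def penalizedDiff (u v : ℝ × ℝ → ℝ) (T η ε δ : ℝ) (x₀ : ℝ × ℝ)
    (w : (ℝ × ℝ) × (ℝ × ℝ)) : ℝ :=
  u w.1 - v w.2 - η / (T - w.1.2) - ε⁻¹ * sqDist w.1 w.2 - δ * sqDist w.1 x₀

section Doubling

variable {u v : ℝ × ℝ → ℝ} {T η ε δ : ℝ} {x₀ : ℝ × ℝ}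

lemma penalties_le_of_le_penalizedDiff {c : ℝ} {w : (ℝ × ℝ) × (ℝ × ℝ)} (hη : 0 ≤ η)
    (hε : 0 ≤ ε) (hδ : 0 ≤ δ) (hwT : w.1.2 < T) (hw : c ≤ penalizedDiff u v T η ε δ x₀ w) :
    η / (T - w.1.2) ≤ u w.1 - v w.2 - c ∧ ε⁻¹ * sqDist w.1 w.2 ≤ u w.1 - v w.2 - c ∧
      δ * sqDist w.1 x₀ ≤ u w.1 - v w.2 - c := by
  have h₁ : 0 ≤ η / (T - w.1.2) := div_nonneg hη (sub_pos.2 hwT).le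
  have h₂ : 0 ≤ ε⁻¹ * sqDist w.1 w.2 := mul_nonneg (inv_nonneg.2 hε) (sqDist_nonneg _ _)
  have h₃ : 0 ≤ δ * sqDist w.1 x₀ := mul_nonneg hδ (sqDist_nonneg _ _)
  unfold penalizedDiff at hw
  refine ⟨?_, ?_, ?_⟩ <;> linarith

theorem exists_isMaxOn_penalizedDiff {K : Set (ℝ × ℝ)} (hK : IsClosed K)
    (hu : ContinuousOn u K) (hv : ContinuousOn v K) {B : ℝ}
    (hB : ∀ x ∈ K, ∀ y ∈ K, u x - v y ≤ B) (hη : 0 < η) (hε : 0 < ε) (hδ : 0 < δ)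
    (hx₀ : x₀ ∈ K) (hx₀T : x₀.2 < T) (h₀ : 0 ≤ penalizedDiff u v T η ε δ x₀ (x₀, x₀)) :
    ∃ w ∈ {w : (ℝ × ℝ) × (ℝ × ℝ) | sqDist w.1 x₀ ≤ B / δ ∧ sqDist w.1 w.2 ≤ B * ε} ∩
        {w | w.1 ∈ K ∧ w.2 ∈ K ∧ w.1.2 ≤ T - η / B},
      IsMaxOn (penalizedDiff u v T η ε δ x₀) {w | w.1 ∈ K ∧ w.2 ∈ K ∧ w.1.2 < T} w := by
  have hB₀ : 0 < B := by
    have := hB x₀ hx₀ x₀ hx₀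
    have := div_pos hη (sub_pos.2 hx₀T)
    simp only [penalizedDiff, sqDist_self, mul_zero] at h₀
    linarith
  have hτ : 0 < η / B := div_pos hη hB₀
  set C : Set ((ℝ × ℝ) × (ℝ × ℝ)) := {w | sqDist w.1 x₀ ≤ B / δ ∧ sqDist w.1 w.2 ≤ B * ε} ∩
    {w | w.1 ∈ K ∧ w.2 ∈ K ∧ w.1.2 ≤ T - η / B}
  have hC : IsCompact C := (isCompact_setOf_sqDist_le x₀ _ _).inter_right <|
    (hK.preimage continuous_fst).inter <| (hK.preimage continuous_snd).inter <|
      isClosed_le continuous_fst.snd continuous_const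
  have hCT : ∀ w ∈ C, T - w.1.2 ≠ 0 := fun w hw => by linarith [hw.2.2.2]
  have hcont : ContinuousOn (penalizedDiff u v T η ε δ x₀) C :=
    ((((hu.comp continuous_fst.continuousOn fun w hw => hw.2.1).sub
      (hv.comp continuous_snd.continuousOn fun w hw => hw.2.2.1)).sub
      (continuousOn_const.div (by fun_prop) hCT)).sub (by fun_prop)).sub (by fun_prop)
  refine hC.exists_isMaxOn_of_superlevel_subset hcont ⟨hx₀, hx₀, hx₀T⟩ h₀ fun w hw hw₀ => ?_
  have hB' := hB _ hw.1 _ hw.2.1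
  obtain ⟨h₁, h₂, h₃⟩ := penalties_le_of_le_penalizedDiff hη.le hε.le hδ.le hw.2.2 hw₀
  rw [sub_zero] at h₁ h₂ h₃
  refine ⟨⟨(le_div_iff₀' hδ).2 (h₃.trans hB'), ?_⟩, hw.1, hw.2.1, ?_⟩
  · rw [mul_comm]; exact (inv_mul_le_iff₀ hε).1 (h₂.trans hB')
  · have := (div_le_iff₀ (sub_pos.2 hw.2.2)).1 (h₁.trans hB')
    have := (div_le_iff₀ hB₀).2 (by linarith : η ≤ (T - w.1.2) * B)
    linarith

variable {H : (ℝ × ℝ) → ℝ → ℝ → ℝ} {U : Set (ℝ × ℝ)} {x y : ℝ × ℝ}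

theorem IsViscositySubsolnOn.le_zero_of_penalizedDiff_le
    (hsub : IsViscositySubsolnOn (fun y q p => p.2 + H y q p.1) u U) (hU : IsOpen U)
    (hη : 0 ≤ η) (hx : x ∈ U) (hxT : x.2 < T)
    (hmax : ∀ x' ∈ U, penalizedDiff u v T η ε δ x₀ (x', y) ≤ penalizedDiff u v T η ε δ x₀ (x, y)) :
    ε⁻¹ * (2 * (x.2 - y.2)) + δ * (2 * (x.2 - x₀.2)) + η / (T - x.2) ^ 2
      + H x (u x) (ε⁻¹ * (2 * (x.1 - y.1)) + δ * (2 * (x.1 - x₀.1))) ≤ 0 := by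
  have hψ : HasFDerivAt (fun x' => ε⁻¹ * sqDist x' y + δ * sqDist x' x₀) _ x :=
    ((hasFDerivAt_sqDist x y).const_mul ε⁻¹).add ((hasFDerivAt_sqDist x x₀).const_mul δ)
  have hloc : IsLocalMax
      (fun x' => u x' - (ε⁻¹ * sqDist x' y + δ * sqDist x' x₀ + η / (T - x'.2))) x := by
    filter_upwards [hU.mem_nhds hx] with x' hx'
    have := hmax x' hx'
    simp only [penalizedDiff] at this
    linarith
  have := hsub.le_zero_of_isLocalMax_sub_barrier
    ((contDiff_const.mul (contDiff_sqDist y)).add (contDiff_const.mul (contDiff_sqDist x₀)))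
    hη hx hxT hloc
  simpa [hψ.fderiv, add_assoc] using this

theorem IsViscositySupersolnOn.nonneg_of_penalizedDiff_le
    (hsup : IsViscositySupersolnOn (fun y q p => p.2 + H y q p.1) v U) (hU : IsOpen U)
    (hy : y ∈ U)
    (hmax : ∀ y' ∈ U, penalizedDiff u v T η ε δ x₀ (x, y') ≤ penalizedDiff u v T η ε δ x₀ (x, y)) :
    0 ≤ ε⁻¹ * (2 * (x.2 - y.2)) + H y (v y) (ε⁻¹ * (2 * (x.1 - y.1))) := by
  let φ : ℝ × ℝ → ℝ := fun y' => -ε⁻¹ * sqDist y' x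
  have hφ : HasFDerivAt φ _ y := (hasFDerivAt_sqDist y x).const_mul (-ε⁻¹)
  have hloc : IsLocalMin (fun y' => v y' - φ y') y := by
    filter_upwards [hU.mem_nhds hy] with y' hy'
    have := hmax y' hy'
    simp only [penalizedDiff, sqDist_comm x] at this
    simp only [φ]
    linarith
  have := hsup.2 φ (contDiff_const.mul (contDiff_sqDist x)) y hy hloc
  simp only [hφ.fderiv] at this
  convert this using 3 <;> simp <;> ring

end Doubling

lemma le_of_subsoln_supersoln_ineq {H : (ℝ × ℝ) → ℝ → ℝ → ℝ} (hH3 : SatisfiesR3 H) {ω : ℝ → ℝ}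
    (hω₁ : ∀ (y₁ y₂ : ℝ × ℝ) (u p₁ p₂ : ℝ), |H y₁ u p₁ - H y₂ u p₂| ≤ ω (‖y₁ - y₂‖ + |p₁ - p₂|))
    (hω₂ : ∀ (y₁ y₂ : ℝ × ℝ) (u p : ℝ), |H y₁ u p - H y₂ u p| ≤ ω (‖y₁ - y₂‖ * (1 + |p|)))
    {x y : ℝ × ℝ} {r s p q a b c : ℝ} (hsr : s ≤ r)
    (hsub : q + b + c + H x r (p + a) ≤ 0) (hsup : 0 ≤ q + H y s p) :
    c ≤ -b + ω |a| + ω (‖x - y‖ * (1 + |p|)) := by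
  have h₁ : H x s (p + a) ≤ H x r (p + a) := hH3 x (p + a) hsr
  have h₂ : H x s p - H x s (p + a) ≤ ω |a| := by
    simpa using (le_abs_self _).trans (hω₁ x x s p (p + a))
  have h₃ := (abs_le.1 (hω₂ x y s p)).1
  linarith

lemma abs_mul_two_mul_sub_le {δ B m : ℝ} {x c : ℝ × ℝ} (hδ : 0 ≤ δ) (hm : 0 ≤ m)
    (hB : δ * sqDist x c ≤ B) (hδB : 4 * δ * B ≤ m ^ 2) :
    |δ * (2 * (x.1 - c.1))| ≤ m ∧ |δ * (2 * (x.2 - c.2))| ≤ m := by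
  have h := mul_le_mul_of_nonneg_left hB hδ
  unfold sqDist at h
  constructor <;> refine abs_le_of_sq_le_sq ?_ hm
  · nlinarith [mul_nonneg hδ (mul_nonneg hδ (sq_nonneg (x.2 - c.2)))]
  · nlinarith [mul_nonneg hδ (mul_nonneg hδ (sq_nonneg (x.1 - c.1)))]

lemma norm_sub_mul_one_add_le (x y : ℝ × ℝ) {ε : ℝ} (hε : 0 ≤ ε) :
    ‖x - y‖ * (1 + |ε⁻¹ * (2 * (x.1 - y.1))|) ≤ ‖x - y‖ + 2 * (ε⁻¹ * sqDist x y) := by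
  have h₁ : |x.1 - y.1| ≤ ‖x - y‖ := by simpa using norm_fst_le (x - y)
  have h₂ : ‖x - y‖ * |x.1 - y.1| ≤ sqDist x y :=
    (mul_le_mul_of_nonneg_left h₁ (norm_nonneg _)).trans (sq (‖x - y‖) ▸ norm_sub_sq_le_sqDist x y)
  have h₃ := mul_le_mul_of_nonneg_left h₂ (inv_nonneg.2 hε)
  rw [abs_mul, abs_mul, abs_of_nonneg (inv_nonneg.2 hε), abs_two]
  nlinarith

theorem div_sq_le_of_isMaxOn_penalizedDiff {T : ℝ} {Z : Set ℝ} (hZ : IsOpen Z)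
    {H : (ℝ × ℝ) → ℝ → ℝ → ℝ} (hH3 : SatisfiesR3 H) {ω : ℝ → ℝ} (hωmono : Monotone ω)
    (hω₁ : ∀ (y₁ y₂ : ℝ × ℝ) (u p₁ p₂ : ℝ), |H y₁ u p₁ - H y₂ u p₂| ≤ ω (‖y₁ - y₂‖ + |p₁ - p₂|))
    (hω₂ : ∀ (y₁ y₂ : ℝ × ℝ) (u p : ℝ), |H y₁ u p - H y₂ u p| ≤ ω (‖y₁ - y₂‖ * (1 + |p|)))
    {u v : ℝ × ℝ → ℝ}
    (hsub : IsViscositySubsolnOn (fun y q p => p.2 + H y q p.1) u (Z ×ˢ Ioo 0 T))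
    (hsup : IsViscositySupersolnOn (fun y q p => p.2 + H y q p.1) v (Z ×ˢ Ioo 0 T))
    {S θ : ℝ} (hS : 0 ≤ S) (hΓ : ∀ q ∈ parabolicBoundary Z T, u q - v q ≤ S)
    {η ε δ : ℝ} (hη : 0 ≤ η) (hε : 0 ≤ ε) (hδ : 0 ≤ δ) {x₀ x y : ℝ × ℝ}
    (hmax : IsMaxOn (penalizedDiff u v T η ε δ x₀)
      {w | w.1 ∈ closure Z ×ˢ Icc 0 T ∧ w.2 ∈ closure Z ×ˢ Icc 0 T ∧ w.1.2 < T} (x, y))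
    (hxK : x ∈ closure Z ×ˢ Icc 0 T) (hyK : y ∈ closure Z ×ˢ Icc 0 T) (hxT : x.2 < T)
    (hyT : y.2 < T) (hθΦ : S + θ ≤ penalizedDiff u v T η ε δ x₀ (x, y))
    (hu : |u x - u y| < θ) (hv : |v x - v y| < θ) :
    η / (T - x.2) ^ 2 ≤ -(δ * (2 * (x.2 - x₀.2))) + ω |δ * (2 * (x.1 - x₀.1))|
      + ω (‖x - y‖ + 2 * (v x - v y)) := by
  have hUK : Z ×ˢ Ioo 0 T ⊆ closure Z ×ˢ Icc 0 T :=
    fun x hx => ⟨subset_closure hx.1, Ioo_subset_Icc_self hx.2⟩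
  have huv := (penalties_le_of_le_penalizedDiff hη hε hδ hxT hθΦ).1
  have hθ : 0 < θ := (abs_nonneg _).trans_lt hu
  have := div_nonneg hη (sub_pos.2 hxT).le
  have hxU := mem_prod_Ioo_of_lt hZ hΓ hxK hxT (by linarith [le_abs_self (v x - v y)])
  have hyU := mem_prod_Ioo_of_lt hZ hΓ hyK hyT (by linarith [le_abs_self (u x - u y)])
  have hvxy : ε⁻¹ * sqDist x y ≤ v x - v y := by
    have := isMaxOn_iff.1 hmax (x, x) ⟨hxK, hxK, hxT⟩
    simp only [penalizedDiff, sqDist_self, mul_zero] at this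
    linarith
  refine (le_of_subsoln_supersoln_ineq hH3 hω₁ hω₂ (by linarith)
    (hsub.le_zero_of_penalizedDiff_le (hZ.prod isOpen_Ioo) hη hxU hxT
      fun x' hx' => hmax ⟨hUK hx', hyK, hx'.2.2⟩)
    (hsup.nonneg_of_penalizedDiff_le (hZ.prod isOpen_Ioo) hyU
      fun y' hy' => hmax ⟨hxK, hUK hy', hxT⟩)).trans ?_
  have : ‖x - y‖ * (1 + |ε⁻¹ * (2 * (x.1 - y.1))|) ≤ ‖x - y‖ + 2 * (v x - v y) := by
    linarith [norm_sub_mul_one_add_le x y hε]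
  linarith [hωmono this]
theorem exists_div_sq_le_of_lt_sub_sub_div {T : ℝ} {Z : Set ℝ} (hZ : IsOpen Z)
    {H : (ℝ × ℝ) → ℝ → ℝ → ℝ} (hH3 : SatisfiesR3 H) {ω : ℝ → ℝ} (hωmono : Monotone ω)
    (hω₁ : ∀ (y₁ y₂ : ℝ × ℝ) (u p₁ p₂ : ℝ), |H y₁ u p₁ - H y₂ u p₂| ≤ ω (‖y₁ - y₂‖ + |p₁ - p₂|))
    (hω₂ : ∀ (y₁ y₂ : ℝ × ℝ) (u p : ℝ), |H y₁ u p - H y₂ u p| ≤ ω (‖y₁ - y₂‖ * (1 + |p|)))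
    {u v : ℝ × ℝ → ℝ} {B S : ℝ}
    (hB : ∀ x ∈ closure Z ×ˢ Icc 0 T, ∀ y ∈ closure Z ×ˢ Icc 0 T, u x - v y ≤ B)
    (hu : ContinuousOn u (closure Z ×ˢ Icc 0 T)) (hv : ContinuousOn v (closure Z ×ˢ Icc 0 T))
    (hsub : IsViscositySubsolnOn (fun y q p => p.2 + H y q p.1) u (Z ×ˢ Ioo 0 T))
    (hsup : IsViscositySupersolnOn (fun y q p => p.2 + H y q p.1) v (Z ×ˢ Ioo 0 T))
    (hS : 0 ≤ S) (hΓ : ∀ q ∈ parabolicBoundary Z T, u q - v q ≤ S) {η e m ρ : ℝ} (hη : 0 < η)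
    (he : 0 < e) (hm : 0 < m) (heB : e ≤ η / B / 2) {x₀ : ℝ × ℝ} (hx₀ : x₀ ∈ Z ×ˢ Ioo 0 T)
    (hρ : S + ρ < u x₀ - v x₀ - η / (T - x₀.2))
    (hUC : ∀ x ∈ closure Z ×ˢ Icc 0 T, ∀ y ∈ closure Z ×ˢ Icc 0 T, ‖x - y‖ ≤ e →
      |u x - u y| ≤ ρ ∧ |v x - v y| ≤ ρ) :
    ∃ x ∈ closure Z ×ˢ Icc 0 T, x.2 < T ∧ η / (T - x.2) ^ 2 ≤ m + ω m + ω (e + 2 * ρ) := by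
  have hx₀K : x₀ ∈ closure Z ×ˢ Icc 0 T := ⟨subset_closure hx₀.1, Ioo_subset_Icc_self hx₀.2⟩
  have hρ₀ : 0 ≤ ρ := (abs_nonneg _).trans (hUC x₀ hx₀K x₀ hx₀K (by simpa using he.le)).1
  have hB₀ : 0 < B := by linarith [hB x₀ hx₀K x₀ hx₀K, div_pos hη (sub_pos.2 hx₀.2.2)]
  -- with these `ε` and `δ` the penalty bounds read `‖x - y‖ ≤ e` and `|2 δ (x - x₀)| ≤ m`
  obtain ⟨⟨x, y⟩, ⟨⟨hxx₀, hxy⟩, hxK, hyK, hxτ⟩, hmax⟩ := exists_isMaxOn_penalizedDiff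
    (ε := e ^ 2 / B) (δ := m ^ 2 / (4 * B)) (isClosed_closure.prod isClosed_Icc) hu hv hB hη
    (by positivity) (by positivity) hx₀K hx₀.2.2
    (by simp only [penalizedDiff, sqDist_self, mul_zero, sub_zero]; linarith)
  dsimp only at hxx₀ hxy hxK hyK hxτ
  have hxT : x.2 < T := by linarith [div_pos hη hB₀]
  have hΦ : S + ρ < penalizedDiff u v T η (e ^ 2 / B) (m ^ 2 / (4 * B)) x₀ (x, y) :=
    lt_of_lt_of_le (by simp only [penalizedDiff, sqDist_self]; linarith)
      (isMaxOn_iff.1 hmax (x₀, x₀) ⟨hx₀K, hx₀K, hx₀.2.2⟩)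
  have hxy' : ‖x - y‖ ≤ e := (pow_le_pow_iff_left₀ (norm_nonneg _) he.le two_ne_zero).1
    ((norm_sub_sq_le_sqDist x y).trans (by rwa [mul_div_cancel₀ _ hB₀.ne'] at hxy))
  obtain ⟨hu', hv'⟩ := hUC x hxK y hyK hxy'
  have hyT : y.2 < T := by
    have : |x.2 - y.2| ≤ ‖x - y‖ := by simpa using norm_snd_le (x - y)
    linarith [(abs_le.1 this).1, div_pos hη hB₀]
  have key := div_sq_le_of_isMaxOn_penalizedDiff hZ hH3 hωmono hω₁ hω₂ hsub hsup hS hΓ hη.le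
    (by positivity) (by positivity) hmax hxK hyK hxT hyT (add_sub_cancel S _).le
    (by linarith) (by linarith)
  obtain ⟨hbz, hbt⟩ := abs_mul_two_mul_sub_le (by positivity) hm.le
    ((le_div_iff₀' (by positivity)).1 hxx₀) (le_of_eq (by field_simp))
  refine ⟨x, hxK, hxT, key.trans ?_⟩
  have := hωmono hbz
  have := hωmono (show ‖x - y‖ + 2 * (v x - v y) ≤ e + 2 * ρ by
    linarith [le_abs_self (v x - v y)])
  linarith [(abs_le.1 hbt).1]

theorem sub_sub_div_le_of_mem_prod_Ioo {T : ℝ} (hT : 0 < T) {Z : Set ℝ} (hZ : IsOpen Z)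
    {H : (ℝ × ℝ) → ℝ → ℝ → ℝ} (hH12 : SatisfiesR1R2 H) (hH3 : SatisfiesR3 H)
    {u v : ℝ × ℝ → ℝ} {B S : ℝ}
    (hB : ∀ x ∈ closure Z ×ˢ Icc 0 T, ∀ y ∈ closure Z ×ˢ Icc 0 T, u x - v y ≤ B)
    (huc : UniformContinuousOn u (closure Z ×ˢ Icc 0 T))
    (hvc : UniformContinuousOn v (closure Z ×ˢ Icc 0 T))
    (hsub : IsViscositySubsolnOn (fun y q p => p.2 + H y q p.1) u (Z ×ˢ Ioo 0 T))
    (hsup : IsViscositySupersolnOn (fun y q p => p.2 + H y q p.1) v (Z ×ˢ Ioo 0 T))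
    (hS : 0 ≤ S) (hΓ : ∀ q ∈ parabolicBoundary Z T, u q - v q ≤ S) {η : ℝ} (hη : 0 < η)
    {x₀ : ℝ × ℝ} (hx₀ : x₀ ∈ Z ×ˢ Ioo 0 T) : u x₀ - v x₀ - η / (T - x₀.2) ≤ S := by
  by_contra! hθ
  have hx₀K : x₀ ∈ closure Z ×ˢ Icc 0 T := ⟨subset_closure hx₀.1, Ioo_subset_Icc_self hx₀.2⟩
  have hB₀ : 0 < B := by linarith [hB x₀ hx₀K x₀ hx₀K, div_pos hη (sub_pos.2 hx₀.2.2)]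
  obtain ⟨-, ω, ⟨hωmono, -, -, hω0⟩, hω₁, hω₂⟩ := hH12
  -- a quarter of the lower bound `η / T²` for the time derivative of the barrier
  set μ := η / (4 * T ^ 2) with hμ
  have hμ₀ : 0 < μ := by positivity
  obtain ⟨s, hωs, hs : 0 < s⟩ :=
    ((hω0.eventually (Iio_mem_nhds hμ₀)).and self_mem_nhdsWithin).exists
  set θ := u x₀ - v x₀ - η / (T - x₀.2) - S with hθ_def
  set ρ := min (θ / 2) (s / 4)
  have hρ : 0 < ρ := lt_min (by linarith) (by positivity)
  obtain ⟨du, hdu, hu⟩ := Metric.uniformContinuousOn_iff_le.1 huc ρ hρ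
  obtain ⟨dv, hdv, hv⟩ := Metric.uniformContinuousOn_iff_le.1 hvc ρ hρ
  set e := min (min du dv) (min (s / 2) (η / B / 2))
  have hUC : ∀ x ∈ closure Z ×ˢ Icc 0 T, ∀ y ∈ closure Z ×ˢ Icc 0 T, ‖x - y‖ ≤ e →
      |u x - u y| ≤ ρ ∧ |v x - v y| ≤ ρ := fun x hx y hy hxy => by
    have hd : dist x y ≤ min du dv := (dist_eq_norm x y).trans_le (hxy.trans (min_le_left _ _))
    exact ⟨by simpa [Real.dist_eq] using hu x hx y hy (hd.trans (min_le_left _ _)),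
      by simpa [Real.dist_eq] using hv x hx y hy (hd.trans (min_le_right _ _))⟩
  obtain ⟨x, hxK, hxT, hx⟩ := exists_div_sq_le_of_lt_sub_sub_div hZ hH3 hωmono hω₁ hω₂ hB
    huc.continuousOn hvc.continuousOn hsub hsup hS hΓ hη (by positivity)
    (by positivity : 0 < min μ s) ((min_le_right _ _).trans (min_le_right _ _)) hx₀
    (by linarith [min_le_left (θ / 2) (s / 4)]) hUC
  have h4μ : 4 * μ ≤ η / (T - x.2) ^ 2 := by
    rw [show 4 * μ = η / T ^ 2 by rw [hμ]; field_simp]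
    gcongr
    linarith [hxK.2.1]
  have hes : e ≤ s / 2 := (min_le_right _ _).trans (min_le_left _ _)
  have heρ : e + 2 * ρ ≤ s := by linarith [min_le_right (θ / 2) (s / 4)]
  linarith [hωmono (min_le_right μ s), hωmono heρ, min_le_left μ s]

/-- Comparison Theorem (Dirichlet form): for a viscosity subsolution `u` and supersolution `v`
of `∂_t f + H((z,t), f, ∂_z f) = 0` on `𝒰 = 𝒵 × (0,T)`, the positive part of `u − v` on the
closure of `𝒰` is bounded by its supremum over `Γ = (∂𝒵 × [0,T]) ∪ (𝒵̄ × {0})`. -/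
theorem stmt_2 (T : ℝ) (hT : 0 < T) (Z : Set ℝ) (hZ : IsOpen Z)
    (H : (ℝ × ℝ) → ℝ → ℝ → ℝ) (hH12 : SatisfiesR1R2 H) (hH3 : SatisfiesR3 H)
    (u v : ℝ × ℝ → ℝ)
    (hub : ∃ M, ∀ p ∈ closure (Z ×ˢ Ioo (0 : ℝ) T), |u p| ≤ M)
    (hvb : ∃ M, ∀ p ∈ closure (Z ×ˢ Ioo (0 : ℝ) T), |v p| ≤ M)
    (huc : UniformContinuousOn u (closure (Z ×ˢ Ioo (0 : ℝ) T)))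
    (hvc : UniformContinuousOn v (closure (Z ×ˢ Ioo (0 : ℝ) T)))
    (hsub : IsViscositySubsolnOn (fun y q p => p.2 + H y q p.1) u (Z ×ˢ Ioo (0 : ℝ) T))
    (hsup : IsViscositySupersolnOn (fun y q p => p.2 + H y q p.1) v (Z ×ˢ Ioo (0 : ℝ) T)) :
    ∀ p ∈ closure (Z ×ˢ Ioo (0 : ℝ) T),
      max (u p - v p) 0 ≤
        ⨆ q : ((frontier Z ×ˢ Icc (0 : ℝ) T) ∪ (closure Z ×ˢ ({0} : Set ℝ)) : Set (ℝ × ℝ)),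
          max (u ↑q - v ↑q) 0 := by
  intro p hp
  obtain ⟨Mu, hMu⟩ := hub
  obtain ⟨Mv, hMv⟩ := hvb
  have huv : ContinuousOn (fun x => u x - v x) (closure (Z ×ˢ Ioo 0 T)) :=
    huc.continuousOn.sub hvc.continuousOn
  rw [closure_prod_Ioo_eq hT] at hMu hMv huc hvc
  have hB : ∀ x ∈ closure Z ×ˢ Icc 0 T, ∀ y ∈ closure Z ×ˢ Icc 0 T, u x - v y ≤ Mu + Mv :=
    fun x hx y hy => by linarith [(abs_le.1 (hMu x hx)).2, (abs_le.1 (hMv y hy)).1]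
  have hΓK := parabolicBoundary_subset (Z := Z) hT.le
  have hbdd : BddAbove (range fun q : parabolicBoundary Z T => max (u q - v q) 0) :=
    ⟨max (Mu + Mv) 0, by
      rintro _ ⟨q, rfl⟩
      exact max_le_max (hB q (hΓK q.2) q (hΓK q.2)) le_rfl⟩
  set S := ⨆ q : parabolicBoundary Z T, max (u q - v q) 0
  have hS : 0 ≤ S := Real.iSup_nonneg fun _ => le_max_right _ _
  have hΓ : ∀ q ∈ parabolicBoundary Z T, u q - v q ≤ S :=
    fun q hq => (le_max_left _ _).trans (le_ciSup hbdd ⟨q, hq⟩)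
  have hU : ∀ x ∈ Z ×ˢ Ioo 0 T, u x - v x ≤ S := fun x hx => by
    have hTx : 0 < T - x.2 := sub_pos.2 hx.2.2
    refine le_of_forall_pos_le_add fun η hη => ?_
    have := sub_sub_div_le_of_mem_prod_Ioo hT hZ hH12 hH3 hB huc hvc hsub hsup hS hΓ
      (mul_pos hη hTx) hx
    rw [mul_div_cancel_right₀ _ hTx.ne'] at this
    linarith
  exact max_le (ContinuousWithinAt.closure_le hp ((huv p hp).mono subset_closure)
    continuousWithinAt_const hU) hS
end

section
/- Let t₀ ∈ ℝ and β ≥ 0. Suppose H : ℝ² × ℝ × ℝ → ℝ satisfies conditions (R1)–(R2) and the monotonicity condition H((z,t), r, p) − H((z,t), s, p) ≥ β·(r − s) for all (z,t), p and all r ≥ s. Let u, v : ℝ² → ℝ be bounded and uniformly continuous on ℝ × [t₀, ∞), with u a viscosity subsolution and v a viscosity supersolution on ℝ × (t₀, ∞) of ∂_t f + H((z,t), f, ∂_z f) = 0. Then for every t ≥ t₀, e^{β(t − t₀)} · sup_{z ∈ ℝ} (u(z,t) − v(z,t))₊ ≤ sup_{z ∈ ℝ} (u(z, t₀) − v(z,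 t₀))₊, where (a)₊ := max{a, 0}. -/
open Set Filter

open Topology

theorem fderiv_comp_fst_add_comp_snd_apply {f g : ℝ → ℝ} {a b : ℝ} {y : ℝ × ℝ}
    (hf : HasDerivAt f a y.1) (hg : HasDerivAt g b y.2) :
    (fderiv ℝ (fun p : ℝ × ℝ => f p.1 + g p.2) y (1, 0),
      fderiv ℝ (fun p : ℝ × ℝ => f p.1 + g p.2) y (0, 1)) = (a, b) := by
  have h : HasFDerivAt (fun p : ℝ × ℝ => f p.1 + g p.2) _ y :=
    (hf.hasFDerivAt.comp y hasFDerivAt_fst).add (hg.hasFDerivAt.comp y hasFDerivAt_snd)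
  rw [h.fderiv]
  simp

theorem contDiff_comp_fst_add_comp_snd {f g : ℝ → ℝ} (hf : ContDiff ℝ 2 f)
    (hg : ContDiff ℝ 2 g) : ContDiff ℝ 2 (fun p : ℝ × ℝ => f p.1 + g p.2) :=
  (hf.comp contDiff_fst).add (hg.comp contDiff_snd)

theorem IsViscositySubsolnOn.le_zero_of_isLocalMax {F : (ℝ × ℝ) → ℝ → (ℝ × ℝ) → ℝ}
    {u : ℝ × ℝ → ℝ} {U : Set (ℝ × ℝ)} (hu : IsViscositySubsolnOn F u U) {f g : ℝ → ℝ}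
    (hf : ContDiff ℝ 2 f) (hg : ContDiff ℝ 2 g) {y : ℝ × ℝ} (hy : y ∈ U)
    (hmax : IsLocalMax (fun p => u p - (f p.1 + g p.2)) y) {a b : ℝ}
    (ha : HasDerivAt f a y.1) (hb : HasDerivAt g b y.2) : F y (u y) (a, b) ≤ 0 := by
  simpa only [fderiv_comp_fst_add_comp_snd_apply ha hb] using
    hu.2 _ (contDiff_comp_fst_add_comp_snd hf hg) y hy hmax

theorem IsViscositySupersolnOn.zero_le_of_isLocalMin {F : (ℝ × ℝ) → ℝ → (ℝ × ℝ) → ℝ}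
    {v : ℝ × ℝ → ℝ} {U : Set (ℝ × ℝ)} (hv : IsViscositySupersolnOn F v U) {f g : ℝ → ℝ}
    (hf : ContDiff ℝ 2 f) (hg : ContDiff ℝ 2 g) {y : ℝ × ℝ} (hy : y ∈ U)
    (hmin : IsLocalMin (fun p => v p - (f p.1 + g p.2)) y) {a b : ℝ}
    (ha : HasDerivAt f a y.1) (hb : HasDerivAt g b y.2) : 0 ≤ F y (v y) (a, b) := by
  simpa only [fderiv_comp_fst_add_comp_snd_apply ha hb] using
    hv.2 _ (contDiff_comp_fst_add_comp_snd hf hg) y hy hmin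

theorem IsModulus.exists_pos_lt {ω : ℝ → ℝ} (hω : IsModulus ω) {c : ℝ} (hc : 0 < c) :
    ∃ r > 0, ω r < c := by
  obtain ⟨r, hr, hωr⟩ := ((hω.2.2.2.eventually (gt_mem_nhds hc)).and
    self_mem_nhdsWithin).exists
  exact ⟨r, hωr, hr⟩

theorem hamiltonian_sub_ge {H : (ℝ × ℝ) → ℝ → ℝ → ℝ} {ω : ℝ → ℝ} {β : ℝ}
    (hHω : ∀ (y₁ y₂ : ℝ × ℝ) (u p₁ p₂ : ℝ), |H y₁ u p₁ - H y₂ u p₂| ≤ ω (‖y₁ - y₂‖ + |p₁ - p₂|))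
    (hmono : ∀ (y : ℝ × ℝ) (p r s : ℝ), s ≤ r → β * (r - s) ≤ H y r p - H y s p)
    (x y : ℝ × ℝ) {r s : ℝ} (hsr : s ≤ r) (p₁ p₂ : ℝ) :
    β * (r - s) - ω (‖x - y‖ + |p₁ - p₂|) ≤ H x r p₁ - H y s p₂ := by
  have h₁ := hmono x p₁ r s hsr
  have h₂ := (abs_le.mp (hHω x y s p₁ p₂)).1
  linarith

theorem ContinuousOn.exists_isMaxOn_of_isBounded {X : Type*} [PseudoMetricSpace X]
    [ProperSpace X] {f : X → ℝ} {s : Set X} (hf : ContinuousOn f s) (hs : IsClosed s)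
    {x₀ : X} (hx₀ : x₀ ∈ s) (hb : Bornology.IsBounded {x ∈ s | f x₀ ≤ f x}) :
    ∃ x ∈ s, IsMaxOn f s x := by
  refine hf.exists_isMaxOn' hs hx₀ ?_
  rw [← Metric.cobounded_eq_cocompact]
  filter_upwards [mem_inf_of_left hb, mem_inf_of_right (mem_principal_self s)] with x hx hxs
  by_contra h
  exact hx ⟨hxs, (not_le.mp h).le⟩

theorem abs_le_sqrt_mul_of_sq_div_le {a ε M : ℝ} (hε : 0 < ε) (h : a ^ 2 / ε ^ 2 ≤ M) :
    |a| ≤ √M * ε := by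
  rw [div_le_iff₀ (by positivity)] at h
  calc |a| = √(a ^ 2) := (Real.sqrt_sq_eq_abs a).symm
    _ ≤ √(M * ε ^ 2) := Real.sqrt_le_sqrt h
    _ = √M * ε := by rw [Real.sqrt_mul' M (by positivity), Real.sqrt_sq hε.le]

noncomputable def logPenalty (z : ℝ) : ℝ := Real.log (1 + z ^ 2)

@[fun_prop]
theorem contDiff_logPenalty {n : WithTop ℕ∞} : ContDiff ℝ n logPenalty :=
  contDiff_iff_contDiffAt.mpr fun z =>
    (Real.contDiffAt_log.mpr (by positivity : (1 : ℝ) + z ^ 2 ≠ 0)).comp z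
      (by fun_prop : ContDiffAt ℝ n (fun z : ℝ => 1 + z ^ 2) z)

theorem logPenalty_nonneg (z : ℝ) : 0 ≤ logPenalty z :=
  Real.log_nonneg (by nlinarith [sq_nonneg z])

theorem hasDerivAt_logPenalty (z : ℝ) : HasDerivAt logPenalty (2 * z / (1 + z ^ 2)) z := by
  have h : HasDerivAt (fun w : ℝ => 1 + w ^ 2) (2 * z) z := by
    simpa using ((hasDerivAt_id z).pow 2).const_add 1
  exact h.log (by positivity)

theorem abs_deriv_logPenalty_le_one (z : ℝ) : |deriv logPenalty z| ≤ 1 := by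
  rw [(hasDerivAt_logPenalty z).deriv, abs_div, abs_of_pos (by positivity : (0 : ℝ) < 1 + z ^ 2),
    div_le_one (by positivity), abs_mul, abs_two]
  nlinarith [sq_abs z, sq_nonneg (|z| - 1)]

theorem abs_le_exp_of_mul_logPenalty_le {z α M : ℝ} (hα : 0 < α) (h : α * logPenalty z ≤ M) :
    |z| ≤ Real.exp (M / α) := by
  have h₁ : 1 + z ^ 2 ≤ Real.exp (M / α) := by
    rw [← Real.exp_log (by positivity : (0 : ℝ) < 1 + z ^ 2)]
    exact Real.exp_le_exp.mpr ((le_div_iff₀' hα).mpr h)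
  nlinarith [sq_nonneg (|z| - 1), sq_abs z]

noncomputable def spacePenalty (ε α z z' : ℝ) : ℝ :=
  (z - z') ^ 2 / ε ^ 2 + α * (logPenalty z + logPenalty z')

noncomputable def timePenalty (g : ℝ → ℝ) (ε s s' : ℝ) : ℝ := g s + (s - s') ^ 2 / ε ^ 2

noncomputable def doubledFunctional (u v : ℝ × ℝ → ℝ) (g : ℝ → ℝ) (ε α : ℝ) (x y : ℝ × ℝ) :
    ℝ :=
  u x - v y - (spacePenalty ε α x.1 y.1 + timePenalty g ε x.2 y.2)

section Penalties

variable {ε α : ℝ} {g : ℝ → ℝ}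

theorem contDiff_spacePenalty_left (z' : ℝ) :
    ContDiff ℝ 2 (fun z => spacePenalty ε α z z') := by
  unfold spacePenalty; fun_prop

theorem contDiff_spacePenalty_right (z : ℝ) :
    ContDiff ℝ 2 (fun z' => -spacePenalty ε α z z') := by
  unfold spacePenalty; fun_prop

theorem contDiff_timePenalty_left (hg : ContDiff ℝ 2 g) (s' : ℝ) :
    ContDiff ℝ 2 (fun s => timePenalty g ε s s') := by
  unfold timePenalty; fun_prop

theorem contDiff_timePenalty_right (s : ℝ) :
    ContDiff ℝ 2 (fun s' => -timePenalty g ε s s') := by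
  unfold timePenalty; fun_prop

theorem hasDerivAt_spacePenalty_left (z z' : ℝ) :
    HasDerivAt (fun w => spacePenalty ε α w z')
      (2 * (z - z') / ε ^ 2 + α * deriv logPenalty z) z := by
  have h := ((((hasDerivAt_id z).sub_const z').pow 2).div_const (ε ^ 2)).add
    (((hasDerivAt_logPenalty z).add_const (logPenalty z')).const_mul α)
  refine h.congr_deriv ?_
  rw [(hasDerivAt_logPenalty z).deriv]; simp

theorem hasDerivAt_spacePenalty_right (z z' : ℝ) :
    HasDerivAt (fun w => -spacePenalty ε α z w)
      (2 * (z - z') / ε ^ 2 - α * deriv logPenalty z') z' := by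
  have h := (((((hasDerivAt_id z').const_sub z).pow 2).div_const (ε ^ 2)).add
    (((hasDerivAt_logPenalty z').const_add (logPenalty z)).const_mul α)).neg
  refine h.congr_deriv ?_
  rw [(hasDerivAt_logPenalty z').deriv]
  simp only [Nat.cast_ofNat, id_eq, Nat.add_one_sub_one, pow_one, mul_neg, mul_one, neg_add_rev]
  ring

theorem hasDerivAt_timePenalty_left {g' s : ℝ} (hg : HasDerivAt g g' s) (s' : ℝ) :
    HasDerivAt (fun w => timePenalty g ε w s') (g' + 2 * (s - s') / ε ^ 2) s := by
  have h := hg.add ((((hasDerivAt_id s).sub_const s').pow 2).div_const (ε ^ 2))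
  refine h.congr_deriv ?_
  simp

theorem hasDerivAt_timePenalty_right (s s' : ℝ) :
    HasDerivAt (fun w => -timePenalty g ε s w) (2 * (s - s') / ε ^ 2) s' := by
  have h := (((((hasDerivAt_id s').const_sub s).pow 2).div_const (ε ^ 2)).const_add (g s)).neg
  refine h.congr_deriv ?_
  simp only [Nat.cast_ofNat, id_eq, Nat.add_one_sub_one, pow_one, mul_neg, mul_one]
  ring

end Penalties

theorem deriv_add_mul_sub_le_of_doubled_max {H : (ℝ × ℝ) → ℝ → ℝ → ℝ} {ω : ℝ → ℝ} {β : ℝ}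
    {u v : ℝ × ℝ → ℝ} {U : Set (ℝ × ℝ)} {g : ℝ → ℝ} {ε α g' : ℝ} {x y : ℝ × ℝ}
    (hsub : IsViscositySubsolnOn (fun y q p => p.2 + H y q p.1) u U)
    (hsup : IsViscositySupersolnOn (fun y q p => p.2 + H y q p.1) v U)
    (hHω : ∀ (y₁ y₂ : ℝ × ℝ) (u p₁ p₂ : ℝ), |H y₁ u p₁ - H y₂ u p₂| ≤ ω (‖y₁ - y₂‖ + |p₁ - p₂|))
    (hω : Monotone ω)
    (hmono : ∀ (y : ℝ × ℝ) (p r s : ℝ), s ≤ r → β * (r - s) ≤ H y r p - H y s p)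
    (hg : ContDiff ℝ 2 g) (hg' : HasDerivAt g g' x.2) (hα : 0 ≤ α) (hx : x ∈ U) (hy : y ∈ U)
    (hxmax : ∀ᶠ p in 𝓝 x, doubledFunctional u v g ε α p y ≤ doubledFunctional u v g ε α x y)
    (hymax : ∀ᶠ p in 𝓝 y, doubledFunctional u v g ε α x p ≤ doubledFunctional u v g ε α x y)
    (hvu : v y ≤ u x) :
    g' + β * (u x - v y) ≤ ω (‖x - y‖ + 2 * α) := by
  have hu := hsub.le_zero_of_isLocalMax (contDiff_spacePenalty_left y.1)
    (contDiff_timePenalty_left hg y.2) hx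
    (hxmax.mono fun p hp => by unfold doubledFunctional at hp; linarith)
    (hasDerivAt_spacePenalty_left x.1 y.1) (hasDerivAt_timePenalty_left hg' y.2)
  have hv := hsup.zero_le_of_isLocalMin (contDiff_spacePenalty_right x.1)
    (contDiff_timePenalty_right x.2) hy
    (hymax.mono fun p hp => by unfold doubledFunctional at hp; simp only; linarith)
    (hasDerivAt_spacePenalty_right x.1 y.1) (hasDerivAt_timePenalty_right x.2 y.2)
  have hH := hamiltonian_sub_ge hHω hmono x y hvu
    (2 * (x.1 - y.1) / ε ^ 2 + α * deriv logPenalty x.1)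
    (2 * (x.1 - y.1) / ε ^ 2 - α * deriv logPenalty y.1)
  have hp : |2 * (x.1 - y.1) / ε ^ 2 + α * deriv logPenalty x.1
      - (2 * (x.1 - y.1) / ε ^ 2 - α * deriv logPenalty y.1)| ≤ 2 * α := by
    have h₁ := abs_deriv_logPenalty_le_one x.1
    have h₂ := abs_deriv_logPenalty_le_one y.1
    calc _ = |α * (deriv logPenalty x.1 + deriv logPenalty y.1)| := by congr 1; ring
      _ = α * |deriv logPenalty x.1 + deriv logPenalty y.1| := by rw [abs_mul, abs_of_nonneg hα]
      _ ≤ α * (1 + 1) := by gcongr; exact (abs_add_le _ _).trans (add_le_add h₁ h₂)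
      _ = 2 * α := by ring
  have := hω (add_le_add_right hp ‖x - y‖)
  dsimp only at hu hv
  linarith

noncomputable def barrier (t₀ β A η s : ℝ) : ℝ := A * Real.exp (-β * (s - t₀)) + η * (s - t₀)

section Barrier

variable {t₀ β A η : ℝ}

theorem contDiff_barrier : ContDiff ℝ 2 (barrier t₀ β A η) := by
  unfold barrier; fun_prop

theorem hasDerivAt_barrier (s : ℝ) :
    HasDerivAt (barrier t₀ β A η) (η - β * (A * Real.exp (-β * (s - t₀)))) s := by
  have h := ((((hasDerivAt_id s).sub_const t₀).const_mul (-β)).exp.const_mul A).add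
    (((hasDerivAt_id s).sub_const t₀).const_mul η)
  refine h.congr_deriv ?_
  simp only [id_eq, mul_one]; ring

theorem mul_sub_le_barrier (hA : 0 ≤ A) (s : ℝ) : η * (s - t₀) ≤ barrier t₀ β A η s :=
  le_add_of_nonneg_left (by positivity)

theorem sub_mul_le_barrier (hA : 0 ≤ A) (hη : 0 ≤ η) {s : ℝ} (hs : t₀ ≤ s) :
    A - A * β * (s - t₀) ≤ barrier t₀ β A η s := by
  have h₁ : A * (1 - β * (s - t₀)) ≤ A * Real.exp (-β * (s - t₀)) := by
    gcongr; linarith [Real.add_one_le_exp (-β * (s - t₀))]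
  have h₂ : 0 ≤ η * (s - t₀) := mul_nonneg hη (sub_nonneg.mpr hs)
  unfold barrier; linarith

end Barrier

section Doubling

variable {u v : ℝ × ℝ → ℝ} {g : ℝ → ℝ} {ε α M : ℝ} {x y : ℝ × ℝ}

theorem doubled_self : doubledFunctional u v g ε α x x =
    u x - v x - g x.2 - α * (logPenalty x.1 + logPenalty x.1) := by
  simp only [doubledFunctional, spacePenalty, timePenalty, sub_self]
  ring

theorem add_doubled_le (hα : 0 ≤ α) : g x.2 + doubledFunctional u v g ε α x y ≤ u x - v y := by
  have : 0 ≤ α * (logPenalty x.1 + logPenalty y.1) :=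
    mul_nonneg hα (add_nonneg (logPenalty_nonneg _) (logPenalty_nonneg _))
  unfold doubledFunctional spacePenalty timePenalty
  have : 0 ≤ (x.1 - y.1) ^ 2 / ε ^ 2 + (x.2 - y.2) ^ 2 / ε ^ 2 := by positivity
  linarith

theorem penalties_le_of_doubled_nonneg (hα : 0 ≤ α) (hg : 0 ≤ g x.2) (hM : u x - v y ≤ M)
    (hΦ : 0 ≤ doubledFunctional u v g ε α x y) :
    (x.1 - y.1) ^ 2 / ε ^ 2 ≤ M ∧ (x.2 - y.2) ^ 2 / ε ^ 2 ≤ M ∧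
      α * logPenalty x.1 ≤ M ∧ α * logPenalty y.1 ≤ M ∧ g x.2 ≤ M := by
  unfold doubledFunctional spacePenalty timePenalty at hΦ
  have h₁ : 0 ≤ (x.1 - y.1) ^ 2 / ε ^ 2 := by positivity
  have h₂ : 0 ≤ (x.2 - y.2) ^ 2 / ε ^ 2 := by positivity
  have h₃ : 0 ≤ α * logPenalty x.1 := mul_nonneg hα (logPenalty_nonneg _)
  have h₄ : 0 ≤ α * logPenalty y.1 := mul_nonneg hα (logPenalty_nonneg _)
  refine ⟨?_, ?_, ?_, ?_, ?_⟩ <;> linarith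

theorem norm_sub_le_of_doubled_nonneg (hε : 0 < ε) (hα : 0 ≤ α) (hg : 0 ≤ g x.2)
    (hM : u x - v y ≤ M) (hΦ : 0 ≤ doubledFunctional u v g ε α x y) : ‖x - y‖ ≤ √M * ε := by
  obtain ⟨h₁, h₂, -⟩ := penalties_le_of_doubled_nonneg hα hg hM hΦ
  exact max_le (abs_le_sqrt_mul_of_sq_div_le hε h₁) (abs_le_sqrt_mul_of_sq_div_le hε h₂)

end Doubling

theorem le_modulus_of_doubled_max {H : (ℝ × ℝ) → ℝ → ℝ → ℝ} {ω : ℝ → ℝ}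
    {t₀ β A η ε α : ℝ} {u v : ℝ × ℝ → ℝ} {x y : ℝ × ℝ}
    (hsub : IsViscositySubsolnOn (fun y q p => p.2 + H y q p.1) u (univ ×ˢ Ioi t₀))
    (hsup : IsViscositySupersolnOn (fun y q p => p.2 + H y q p.1) v (univ ×ˢ Ioi t₀))
    (hHω : ∀ (y₁ y₂ : ℝ × ℝ) (u p₁ p₂ : ℝ), |H y₁ u p₁ - H y₂ u p₂| ≤ ω (‖y₁ - y₂‖ + |p₁ - p₂|))
    (hω : Monotone ω)
    (hmono : ∀ (y : ℝ × ℝ) (p r s : ℝ), s ≤ r → β * (r - s) ≤ H y r p - H y s p)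
    (hβ : 0 ≤ β) (hA : 0 ≤ A) (hη : 0 ≤ η) (hα : 0 ≤ α)
    (hmax : ∀ x' y' : ℝ × ℝ, t₀ ≤ x'.2 → t₀ ≤ y'.2 →
      doubledFunctional u v (barrier t₀ β A η) ε α x' y' ≤
        doubledFunctional u v (barrier t₀ β A η) ε α x y)
    (hxt : t₀ < x.2) (hyt : t₀ < y.2)
    (hΦ : 0 ≤ doubledFunctional u v (barrier t₀ β A η) ε α x y) :
    η ≤ ω (‖x - y‖ + 2 * α) := by
  have hxmax := ((continuous_snd.tendsto x).eventually (lt_mem_nhds hxt)).mono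
    fun p hp => hmax p y hp.le hyt.le
  have hymax := ((continuous_snd.tendsto y).eventually (lt_mem_nhds hyt)).mono
    fun p hp => hmax x p hxt.le hp.le
  have hgap := add_doubled_le (u := u) (v := v) (g := barrier t₀ β A η) (ε := ε) (x := x)
    (y := y) hα
  have hb : A * Real.exp (-β * (x.2 - t₀)) ≤ barrier t₀ β A η x.2 :=
    le_add_of_nonneg_right (mul_nonneg hη (sub_nonneg.mpr hxt.le))
  have hAe : A * Real.exp (-β * (x.2 - t₀)) ≤ u x - v y := by linarith
  have hAe₀ : 0 ≤ A * Real.exp (-β * (x.2 - t₀)) := by positivity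
  have key := deriv_add_mul_sub_le_of_doubled_max hsub hsup hHω hω hmono contDiff_barrier
    (hasDerivAt_barrier x.2) hα ⟨trivial, hxt⟩ ⟨trivial, hyt⟩ hxmax hymax (by linarith)
  nlinarith [mul_le_mul_of_nonneg_left hAe hβ]

section Maximum

variable {u v : ℝ × ℝ → ℝ} {t₀ β A η ε α M : ℝ}

theorem isBounded_doubled_nonneg (hε : 0 < ε) (hα : 0 < α) (hη : 0 < η) (hA : 0 ≤ A)
    (hM : ∀ x y : ℝ × ℝ, t₀ ≤ x.2 → t₀ ≤ y.2 → u x - v y ≤ M) :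
    Bornology.IsBounded {q : (ℝ × ℝ) × (ℝ × ℝ) | t₀ ≤ q.1.2 ∧ t₀ ≤ q.2.2 ∧
      0 ≤ doubledFunctional u v (barrier t₀ β A η) ε α q.1 q.2} := by
  refine isBounded_iff_forall_norm_le.mpr
    ⟨max (Real.exp (M / α)) (|t₀| + M / η + √M * ε), ?_⟩
  rintro ⟨x, y⟩ ⟨hx, hy, hΦ⟩
  have hg := mul_sub_le_barrier (t₀ := t₀) (β := β) (η := η) hA x.2
  have hg₀ : 0 ≤ barrier t₀ β A η x.2 := (mul_nonneg hη.le (sub_nonneg.mpr hx)).trans hg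
  obtain ⟨-, -, hx₁, hy₁, hgM⟩ := penalties_le_of_doubled_nonneg hα.le hg₀ (hM x y hx hy) hΦ
  have hx₂ : x.2 - t₀ ≤ M / η := (le_div_iff₀' hη).mpr (hg.trans hgM)
  have hxy : |x.2 - y.2| ≤ √M * ε :=
    (le_max_right _ _).trans (norm_sub_le_of_doubled_nonneg hε hα.le hg₀ (hM x y hx hy) hΦ)
  have hMε : 0 ≤ √M * ε := by positivity
  have hx₂' : |x.2| ≤ |t₀| + M / η :=
    abs_le.mpr ⟨by linarith [neg_abs_le t₀], by linarith [le_abs_self t₀]⟩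
  have hy₂ : |y.2| ≤ |t₀| + M / η + √M * ε := by
    linarith [abs_sub_abs_le_abs_sub y.2 x.2, abs_sub_comm x.2 y.2]
  simp only [Prod.norm_def, Real.norm_eq_abs, max_le_iff]
  exact ⟨⟨le_max_of_le_left (abs_le_exp_of_mul_logPenalty_le hα hx₁),
      le_max_of_le_right (by linarith)⟩,
    le_max_of_le_left (abs_le_exp_of_mul_logPenalty_le hα hy₁), le_max_of_le_right hy₂⟩

theorem exists_forall_doubled_le (hε : 0 < ε) (hα : 0 < α) (hη : 0 < η) (hA : 0 ≤ A)
    (hM : ∀ x y : ℝ × ℝ, t₀ ≤ x.2 → t₀ ≤ y.2 → u x - v y ≤ M)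
    (hu : ContinuousOn u (univ ×ˢ Ici t₀)) (hv : ContinuousOn v (univ ×ˢ Ici t₀))
    {x₀ : ℝ × ℝ} (hx₀ : t₀ ≤ x₀.2)
    (hΦ₀ : 0 ≤ doubledFunctional u v (barrier t₀ β A η) ε α x₀ x₀) :
    ∃ x y : ℝ × ℝ, t₀ ≤ x.2 ∧ t₀ ≤ y.2 ∧ ∀ x' y' : ℝ × ℝ, t₀ ≤ x'.2 → t₀ ≤ y'.2 →
      doubledFunctional u v (barrier t₀ β A η) ε α x' y' ≤
        doubledFunctional u v (barrier t₀ β A η) ε α x y := by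
  have hD : IsClosed ((univ ×ˢ Ici t₀) ×ˢ (univ ×ˢ Ici t₀) : Set ((ℝ × ℝ) × (ℝ × ℝ))) :=
    (isClosed_univ.prod isClosed_Ici).prod (isClosed_univ.prod isClosed_Ici)
  have hcont : ContinuousOn (fun q => doubledFunctional u v (barrier t₀ β A η) ε α q.1 q.2)
      ((univ ×ˢ Ici t₀) ×ˢ (univ ×ˢ Ici t₀)) := by
    have hpen : Continuous fun q : (ℝ × ℝ) × (ℝ × ℝ) =>
        spacePenalty ε α q.1.1 q.2.1 + timePenalty (barrier t₀ β A η) ε q.1.2 q.2.2 := by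
      unfold spacePenalty timePenalty barrier
      fun_prop
    exact ((hu.comp continuousOn_fst fun q hq => hq.1).sub
      (hv.comp continuousOn_snd fun q hq => hq.2)).sub hpen.continuousOn
  obtain ⟨⟨x, y⟩, ⟨⟨-, hx⟩, -, hy⟩, hmax⟩ := hcont.exists_isMaxOn_of_isBounded hD
    (x₀ := (x₀, x₀)) ⟨⟨trivial, hx₀⟩, trivial, hx₀⟩
    ((isBounded_doubled_nonneg (β := β) hε hα hη hA hM).subset
      fun q ⟨⟨⟨_, hq₁⟩, _, hq₂⟩, hle⟩ => ⟨hq₁, hq₂, hΦ₀.trans hle⟩)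
  exact ⟨x, y, hx, hy, fun x' y' hx' hy' => hmax (a := (x', y')) ⟨⟨trivial, hx'⟩, trivial, hy'⟩⟩

end Maximum

theorem exists_pos_sub_lt_of_snd_eq {u v : ℝ × ℝ → ℝ} {t₀ A κ : ℝ}
    (huc : UniformContinuousOn u (univ ×ˢ Ici t₀)) (hvc : UniformContinuousOn v (univ ×ˢ Ici t₀))
    (hinit : ∀ z, u (z, t₀) - v (z, t₀) ≤ A) (hκ : 0 < κ) :
    ∃ ρ > 0, ∀ x y : ℝ × ℝ, t₀ ≤ x.2 → t₀ ≤ y.2 → dist x y < ρ → (x.2 = t₀ ∨ y.2 = t₀) →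
      u x - v y < A + κ := by
  obtain ⟨ρu, hρu, hu⟩ := Metric.uniformContinuousOn_iff.mp huc κ hκ
  obtain ⟨ρv, hρv, hv⟩ := Metric.uniformContinuousOn_iff.mp hvc κ hκ
  refine ⟨min ρu ρv, lt_min hρu hρv, fun x y hx hy hxy ht => ?_⟩
  rcases ht with ht | ht
  · have hvxy := abs_lt.mp (hv x ⟨trivial, hx⟩ y ⟨trivial, hy⟩ (hxy.trans_le (min_le_right _ _)))
    have := hinit x.1
    rw [← ht] at this
    linarith
  · have huxy := abs_lt.mp (hu x ⟨trivial, hx⟩ y ⟨trivial, hy⟩ (hxy.trans_le (min_le_left _ _)))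
    have := hinit y.1
    rw [← ht] at this
    linarith

theorem lt_snd_of_barrier_add_le {u v : ℝ × ℝ → ℝ} {t₀ β A η ρ κ : ℝ} {x y : ℝ × ℝ}
    (hβ : 0 ≤ β) (hA : 0 ≤ A) (hη : 0 ≤ η)
    (hρ : ∀ x y : ℝ × ℝ, t₀ ≤ x.2 → t₀ ≤ y.2 → dist x y < ρ → (x.2 = t₀ ∨ y.2 = t₀) →
      u x - v y < A + κ)
    (hx : t₀ ≤ x.2) (hy : t₀ ≤ y.2) (hxy : dist x y < ρ)
    (hgap : barrier t₀ β A η x.2 + (κ + A * β * ρ) ≤ u x - v y) : t₀ < x.2 ∧ t₀ < y.2 := by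
  by_contra h
  rw [not_and_or, not_lt, not_lt] at h
  have ht : x.2 = t₀ ∨ y.2 = t₀ := h.imp (le_antisymm · hx) (le_antisymm · hy)
  have hxt : x.2 - t₀ ≤ ρ := by
    rcases ht with ht | ht
    · linarith [dist_nonneg.trans_lt hxy]
    · rw [← ht]
      exact ((le_abs_self _).trans (le_max_right (dist x.1 y.1) (dist x.2 y.2))).trans hxy.le
  have h₁ := hρ x y hx hy hxy ht
  have h₂ := sub_mul_le_barrier (β := β) hA hη hx
  have h₃ : A * β * (x.2 - t₀) ≤ A * β * ρ := by gcongr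
  linarith

theorem le_modulus_of_doubled_ge {H : (ℝ × ℝ) → ℝ → ℝ → ℝ} {ω : ℝ → ℝ}
    {t₀ β A η ε α M ρ κ : ℝ} {u v : ℝ × ℝ → ℝ} {x₀ : ℝ × ℝ}
    (hsub : IsViscositySubsolnOn (fun y q p => p.2 + H y q p.1) u (univ ×ˢ Ioi t₀))
    (hsup : IsViscositySupersolnOn (fun y q p => p.2 + H y q p.1) v (univ ×ˢ Ioi t₀))
    (hHω : ∀ (y₁ y₂ : ℝ × ℝ) (u p₁ p₂ : ℝ), |H y₁ u p₁ - H y₂ u p₂| ≤ ω (‖y₁ - y₂‖ + |p₁ - p₂|))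
    (hω : Monotone ω)
    (hmono : ∀ (y : ℝ × ℝ) (p r s : ℝ), s ≤ r → β * (r - s) ≤ H y r p - H y s p)
    (hβ : 0 ≤ β) (hA : 0 ≤ A) (hη : 0 < η) (hα : 0 < α) (hε : 0 < ε)
    (hM : ∀ x y : ℝ × ℝ, t₀ ≤ x.2 → t₀ ≤ y.2 → u x - v y ≤ M)
    (hu : ContinuousOn u (univ ×ˢ Ici t₀)) (hv : ContinuousOn v (univ ×ˢ Ici t₀))
    (hρ : ∀ x y : ℝ × ℝ, t₀ ≤ x.2 → t₀ ≤ y.2 → dist x y < ρ → (x.2 = t₀ ∨ y.2 = t₀) →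
      u x - v y < A + κ)
    (hMε : √M * ε < ρ) (hρκ : A * β * ρ ≤ κ) (hx₀ : t₀ ≤ x₀.2)
    (hΦ₀ : 2 * κ ≤ doubledFunctional u v (barrier t₀ β A η) ε α x₀ x₀) :
    η ≤ ω (ρ + 2 * α) := by
  have hρ₀ : 0 < ρ := (by positivity : 0 ≤ √M * ε).trans_lt hMε
  have hκ : 0 ≤ κ := (by positivity : 0 ≤ A * β * ρ).trans hρκ
  set Φ := doubledFunctional u v (barrier t₀ β A η) ε α
  obtain ⟨x, y, hx, hy, hmax⟩ :=
    exists_forall_doubled_le hε hα hη hA hM hu hv hx₀ (by linarith)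
  have hΦ : 2 * κ ≤ Φ x y := hΦ₀.trans (hmax x₀ x₀ hx₀ hx₀)
  have hg₀ : 0 ≤ barrier t₀ β A η x.2 :=
    (mul_nonneg hη.le (sub_nonneg.mpr hx)).trans (mul_sub_le_barrier hA x.2)
  have hxy : ‖x - y‖ < ρ :=
    (norm_sub_le_of_doubled_nonneg hε hα.le hg₀ (hM x y hx hy) (by linarith)).trans_lt hMε
  obtain ⟨hxt, hyt⟩ := lt_snd_of_barrier_add_le hβ hA hη.le hρ hx hy (by rwa [dist_eq_norm])
    ((add_doubled_le (g := barrier t₀ β A η) (ε := ε) hα.le).trans' (by linarith))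
  calc η ≤ ω (‖x - y‖ + 2 * α) := le_modulus_of_doubled_max hsub hsup hHω hω hmono hβ hA
        hη.le hα.le hmax hxt hyt (by linarith)
    _ ≤ ω (ρ + 2 * α) := hω (by linarith)

theorem sub_le_mul_exp_of_viscosity {H : (ℝ × ℝ) → ℝ → ℝ → ℝ} {ω : ℝ → ℝ} {t₀ β A M : ℝ}
    {u v : ℝ × ℝ → ℝ} (hβ : 0 ≤ β) (hA : 0 ≤ A) (hω : IsModulus ω)
    (hHω : ∀ (y₁ y₂ : ℝ × ℝ) (u p₁ p₂ : ℝ), |H y₁ u p₁ - H y₂ u p₂| ≤ ω (‖y₁ - y₂‖ + |p₁ - p₂|))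
    (hmono : ∀ (y : ℝ × ℝ) (p r s : ℝ), s ≤ r → β * (r - s) ≤ H y r p - H y s p)
    (hM : ∀ x y : ℝ × ℝ, t₀ ≤ x.2 → t₀ ≤ y.2 → u x - v y ≤ M)
    (huc : UniformContinuousOn u (univ ×ˢ Ici t₀)) (hvc : UniformContinuousOn v (univ ×ˢ Ici t₀))
    (hsub : IsViscositySubsolnOn (fun y q p => p.2 + H y q p.1) u (univ ×ˢ Ioi t₀))
    (hsup : IsViscositySupersolnOn (fun y q p => p.2 + H y q p.1) v (univ ×ˢ Ioi t₀))
    (hinit : ∀ z, u (z, t₀) - v (z, t₀) ≤ A) {s : ℝ} (hs : t₀ ≤ s) (z : ℝ) :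
    u (z, s) - v (z, s) ≤ A * Real.exp (-β * (s - t₀)) := by
  by_contra! hlt
  set δ := u (z, s) - v (z, s) - A * Real.exp (-β * (s - t₀))
  have hδ : 0 < δ := sub_pos.mpr hlt
  set η := δ / (4 * (s - t₀ + 1))
  have hη : 0 < η := div_pos hδ (by linarith)
  have hηs : η * (s - t₀) ≤ δ / 4 := by
    have : η * (4 * (s - t₀ + 1)) = δ := div_mul_cancel₀ _ (by linarith)
    linarith
  obtain ⟨r, hr, hωr⟩ := hω.exists_pos_lt hη
  set α := min (r / 4) (δ / (8 * (logPenalty z + 1)))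
  have hα : 0 < α := lt_min (by positivity) (div_pos hδ (by linarith [logPenalty_nonneg z]))
  have hαz : α * (logPenalty z + logPenalty z) ≤ δ / 4 := by
    have : α * (8 * (logPenalty z + 1)) ≤ δ :=
      (le_div_iff₀ (by linarith [logPenalty_nonneg z])).mp (min_le_right _ _)
    linarith
  obtain ⟨ρ₀, hρ₀, hbdry⟩ := exists_pos_sub_lt_of_snd_eq huc hvc hinit (by positivity : 0 < δ / 4)
  set ρ := min (min (r / 2) (δ / (4 * (A * β + 1)))) ρ₀
  have hρ : 0 < ρ := lt_min (lt_min (by positivity) (div_pos hδ (by positivity))) hρ₀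
  have hρA : A * β * ρ ≤ δ / 4 := by
    have : ρ * (4 * (A * β + 1)) ≤ δ :=
      (le_div_iff₀ (by positivity)).mp ((min_le_left _ _).trans (min_le_right _ _))
    linarith
  set ε := ρ / (√M + 1)
  have hε : 0 < ε := by positivity
  have hMε : √M * ε < ρ := by
    have : ε * (√M + 1) = ρ := div_mul_cancel₀ _ (by positivity)
    linarith
  have hΦ₀ : 2 * (δ / 4) ≤ doubledFunctional u v (barrier t₀ β A η) ε α (z, s) (z, s) := by
    simp only [doubled_self, barrier]; linarith
  have := le_modulus_of_doubled_ge hsub hsup hHω hω.1 hmono hβ hA hη hα hε hM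
    huc.continuousOn hvc.continuousOn
    (fun x y hx hy h => hbdry x y hx hy (h.trans_le (min_le_right _ _))) hMε hρA hs hΦ₀
  have hρr : ρ ≤ r / 2 := (min_le_left _ _).trans (min_le_left _ _)
  linarith [hω.1 (by linarith [min_le_left (r / 4) (δ / (8 * (logPenalty z + 1)))] :
    ρ + 2 * α ≤ r)]

/-- Lemma A.5 (strong comparison for Cauchy problems, Crandall–Lions): if `H` satisfies
(R1)–(R2) and the `β`-monotonicity condition, `u` is a viscosity subsolution and `v` a
viscosity supersolution of `∂_t f + H((z,t), f, ∂_z f) = 0` on `ℝ × (t₀,∞)`, both bounded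
and uniformly continuous on `ℝ × [t₀,∞)`, then for every `t ≥ t₀`,
`e^{β(t−t₀)} sup_z (u(z,t) − v(z,t))₊ ≤ sup_z (u(z,t₀) − v(z,t₀))₊`. -/
theorem stmt_6 (t₀ β : ℝ) (hβ : 0 ≤ β)
    (H : (ℝ × ℝ) → ℝ → ℝ → ℝ) (hH : SatisfiesR1R2 H)
    (hmono : ∀ (y : ℝ × ℝ) (p r s : ℝ), s ≤ r → β * (r - s) ≤ H y r p - H y s p)
    (u v : ℝ × ℝ → ℝ)
    (hub : ∃ M, ∀ p ∈ (univ ×ˢ Ici t₀ : Set (ℝ × ℝ)), |u p| ≤ M)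
    (hvb : ∃ M, ∀ p ∈ (univ ×ˢ Ici t₀ : Set (ℝ × ℝ)), |v p| ≤ M)
    (huc : UniformContinuousOn u (univ ×ˢ Ici t₀))
    (hvc : UniformContinuousOn v (univ ×ˢ Ici t₀))
    (hsub : IsViscositySubsolnOn (fun y q p => p.2 + H y q p.1) u (univ ×ˢ Ioi t₀))
    (hsup : IsViscositySupersolnOn (fun y q p => p.2 + H y q p.1) v (univ ×ˢ Ioi t₀)) :
    ∀ t, t₀ ≤ t → ∀ z : ℝ,
      Real.exp (β * (t - t₀)) * max (u (z, t) - v (z, t)) 0 ≤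
        ⨆ z' : ℝ, max (u (z', t₀) - v (z', t₀)) 0 := by
  obtain ⟨-, ω, hω, hHω, -⟩ := hH
  obtain ⟨Mu, hMu⟩ := hub
  obtain ⟨Mv, hMv⟩ := hvb
  have hM : ∀ x y : ℝ × ℝ, t₀ ≤ x.2 → t₀ ≤ y.2 → u x - v y ≤ Mu + Mv := fun x y hx hy => by
    linarith [le_abs_self (u x), neg_abs_le (v y), hMu x ⟨trivial, hx⟩, hMv y ⟨trivial, hy⟩]
  have hbdd : BddAbove (range fun z' => max (u (z', t₀) - v (z', t₀)) 0) :=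
    ⟨max (Mu + Mv) 0, forall_mem_range.mpr fun z' =>
      max_le_max_right 0 (hM (z', t₀) (z', t₀) le_rfl le_rfl)⟩
  set A := ⨆ z', max (u (z', t₀) - v (z', t₀)) 0
  have hA : 0 ≤ A := (le_max_right _ _).trans (le_ciSup hbdd 0)
  have hinit : ∀ z', u (z', t₀) - v (z', t₀) ≤ A :=
    fun z' => (le_max_left _ _).trans (le_ciSup hbdd z')
  intro t ht z
  calc Real.exp (β * (t - t₀)) * max (u (z, t) - v (z, t)) 0
      ≤ Real.exp (β * (t - t₀)) * (A * Real.exp (-β * (t - t₀))) := by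
        gcongr
        exact max_le
          (sub_le_mul_exp_of_viscosity hβ hA hω hHω hmono hM huc hvc hsub hsup hinit ht z)
          (by positivity)
    _ = A := by rw [mul_left_comm, ← Real.exp_add, neg_mul, add_neg_cancel, Real.exp_zero, mul_one]
end

section
/- Let β ≥ 0, T > 0, ε ≥ 0, λ̄ ≥ 0, L₁ ≥ 0. Let λ : ℝ → ℝ with |λ(τ)| ≤ λ̄ for all τ, and let r̄, r̂, Ḡ, Ĝ : ℝ² → ℝ satisfy sup_{(z,τ)} |r̂(z,τ) − r̄(z,τ)| ≤ ε and sup_{(z,τ)} |Ĝ(z,τ) − Ḡ(z,τ)| ≤ ε. Define H(z,τ,p) := −e^{βτ}·λ(τ)·r̄(z,τ) − λ(τ)·Ḡ(z,τ)·p and Ĥ(z,τ,p) := −e^{βτ}·λ(τ)·r̂(z,τ) − λ(τ)·Ĝ(z,τ)·p. Let Υ ⊆ ℝ × (0, T) be open and let u : ℝ² → ℝ be continuous, Lipschitz in its first argument with constant L₁ (|u(z₁,τ) − u(z₂,τ)| ≤ L₁·|z₁ − z₂| for all z₁, z₂, τ), and a viscosity solution on Υ of ∂_τ f + H(z, τ,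 ∂_z f) = 0. Then for every constant C ≥ λ̄·(e^{βT} + L₁), the function w(z,τ) := u(z,τ) + C·ε·τ is a viscosity supersolution on Υ of ∂_τ f + Ĥ(z, τ, ∂_z f) = 0. -/
open Set Filter

/-- `u` is a viscosity solution of `F (y, u y, Du y) = 0` on the open set `U ⊆ ℝ²`. -/
def IsViscositySolnOn (F : (ℝ × ℝ) → ℝ → (ℝ × ℝ) → ℝ) (u : ℝ × ℝ → ℝ)
    (U : Set (ℝ × ℝ)) : Prop :=
  IsViscositySubsolnOn F u U ∧ IsViscositySupersolnOn F u U

/-!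
If `w = u + Cετ` is touched from below at `y` by `φ`, then `u` is touched from below by
`φ − Cετ`, so the supersolution property of `u` gives `φ_τ − Cε + H(y, φ_z) ≥ 0`. As `w` is
`L₁`-Lipschitz in `z`, a test function touching it from below has `|φ_z| ≤ L₁`, and for such
gradients `|Ĥ − H| ≤ λ̄ (e^{βT} + L₁) ε ≤ Cε`.
-/

open Topology

theorem IsLocalMin.fderiv_apply_le_of_sub_le {E : Type*} [NormedAddCommGroup E]
    [NormedSpace ℝ E] {w φ : E → ℝ} {a v : E} {L : ℝ}
    (hmin : IsLocalMin (fun x => w x - φ x) a) (hφ : DifferentiableAt ℝ φ a)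
    (hw : ∀ t > 0, w (a + t • v) - w a ≤ L * t) : fderiv ℝ φ a v ≤ L := by
  have hray : HasDerivAt (fun t : ℝ => a + t • v) v 0 := by
    simpa using ((hasDerivAt_id (0 : ℝ)).smul_const v).const_add a
  have hderiv : HasDerivAt (fun t : ℝ => φ (a + t • v)) (fderiv ℝ φ a v) 0 := by
    have hφ' : HasFDerivAt φ (fderiv ℝ φ a) (a + (0 : ℝ) • v) := by
      simpa using hφ.hasFDerivAt
    exact hφ'.comp_hasDerivAt 0 hray
  have hnear : ∀ᶠ t in 𝓝[>] (0 : ℝ), w a - φ a ≤ w (a + t • v) - φ (a + t • v) := by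
    have hcont : Tendsto (fun t : ℝ => a + t • v) (𝓝 0) (𝓝 a) := by
      simpa using hray.continuousAt.tendsto
    exact (hcont.eventually hmin).filter_mono nhdsWithin_le_nhds
  refine le_of_tendsto (by simpa using hderiv.tendsto_slope_zero_right) ?_
  filter_upwards [hnear, self_mem_nhdsWithin] with t ht (htpos : 0 < t)
  rw [inv_mul_le_iff₀ htpos]
  linarith [hw t htpos]

theorem abs_fderiv_fst_le_of_isLocalMin {w φ : ℝ × ℝ → ℝ} {y : ℝ × ℝ} {L : ℝ}
    (hw : ∀ z₁ z₂ τ : ℝ, |w (z₁, τ) - w (z₂, τ)| ≤ L * |z₁ - z₂|)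
    (hφ : DifferentiableAt ℝ φ y) (hmin : IsLocalMin (fun p => w p - φ p) y) :
    |fderiv ℝ φ y (1, 0)| ≤ L := by
  have hray : ∀ s : ℝ, ∀ t > 0, w (y + t • (s, 0)) - w y ≤ L * |s| * t := by
    intro s t ht
    obtain ⟨z, τ⟩ := y
    have := (le_abs_self _).trans (hw (z + t * s) z τ)
    simpa [abs_mul, abs_of_pos ht, mul_comm, mul_left_comm] using this
  have hright := hmin.fderiv_apply_le_of_sub_le hφ (v := (1, 0)) (by simpa using hray 1)
  have hleft := hmin.fderiv_apply_le_of_sub_le hφ (v := (-1, 0)) (by simpa using hray (-1))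
  have hneg : ((-1 : ℝ), (0 : ℝ)) = -(1, 0) := by simp
  rw [hneg, map_neg] at hleft
  exact abs_le.2 ⟨by linarith, hright⟩

theorem IsViscositySupersolnOn.nonneg_of_isLocalMin_add
    {F : (ℝ × ℝ) → ℝ → (ℝ × ℝ) → ℝ} {u : ℝ × ℝ → ℝ} {U : Set (ℝ × ℝ)}
    (hu : IsViscositySupersolnOn F u U) {g φ : ℝ × ℝ → ℝ} (hg : ContDiff ℝ 2 g)
    (hφ : ContDiff ℝ 2 φ) {y : ℝ × ℝ} (hy : y ∈ U)
    (hmin : IsLocalMin (fun p => u p + g p - φ p) y) :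
    0 ≤ F y (u y) (fderiv ℝ φ y (1, 0) - fderiv ℝ g y (1, 0),
      fderiv ℝ φ y (0, 1) - fderiv ℝ g y (0, 1)) := by
  have hmin' : IsLocalMin (fun p => u p - (φ - g) p) y := by
    simpa only [Pi.sub_apply, sub_sub_eq_add_sub] using hmin
  have hderiv : fderiv ℝ (φ - g) y = fderiv ℝ φ y - fderiv ℝ g y :=
    fderiv_sub (hφ.differentiable two_ne_zero y) (hg.differentiable two_ne_zero y)
  simpa only [hderiv, sub_apply] using hu.2 (φ - g) (hφ.sub hg) y hy hmin'

theorem fderiv_const_mul_snd (c : ℝ) (y : ℝ × ℝ) :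
    fderiv ℝ (fun p : ℝ × ℝ => c * p.2) y = c • ContinuousLinearMap.snd ℝ ℝ ℝ :=
  ((ContinuousLinearMap.snd ℝ ℝ ℝ).hasFDerivAt.const_smul c).fderiv

noncomputable def hamiltonian (β : ℝ) (lam : ℝ → ℝ) (r G : ℝ × ℝ → ℝ) (y : ℝ × ℝ) (p : ℝ) : ℝ :=
  -(Real.exp (β * y.2)) * lam y.2 * r y - lam y.2 * G y * p

theorem abs_hamiltonian_sub_le {β T ε lamBar L : ℝ} {lam : ℝ → ℝ}
    {rbar rhat Gbar Ghat : ℝ × ℝ → ℝ} {y : ℝ × ℝ} {p : ℝ} (hβ : 0 ≤ β) (hτ : y.2 ≤ T)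
    (hlam : |lam y.2| ≤ lamBar) (hr : |rhat y - rbar y| ≤ ε) (hG : |Ghat y - Gbar y| ≤ ε)
    (hp : |p| ≤ L) :
    |hamiltonian β lam rhat Ghat y p - hamiltonian β lam rbar Gbar y p| ≤
      lamBar * (Real.exp (β * T) + L) * ε := by
  have hexp : Real.exp (β * y.2) ≤ Real.exp (β * T) :=
    Real.exp_le_exp.2 (mul_le_mul_of_nonneg_left hτ hβ)
  have hlamBar : 0 ≤ lamBar := (abs_nonneg _).trans hlam
  have hε : 0 ≤ ε := (abs_nonneg _).trans hr
  calc |hamiltonian β lam rhat Ghat y p - hamiltonian β lam rbar Gbar y p|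
      = |-(Real.exp (β * y.2) * lam y.2 * (rhat y - rbar y)) -
          lam y.2 * (Ghat y - Gbar y) * p| := by
        unfold hamiltonian; ring_nf
    _ ≤ Real.exp (β * y.2) * |lam y.2| * |rhat y - rbar y| +
          |lam y.2| * |Ghat y - Gbar y| * |p| := by
        refine (abs_sub _ _).trans ?_
        simp only [abs_neg, abs_mul, Real.abs_exp, le_refl]
    _ ≤ Real.exp (β * T) * lamBar * ε + lamBar * ε * L := by gcongr
    _ = lamBar * (Real.exp (β * T) + L) * ε := by ring

theorem stmt_8_general (β T ε lamBar L₁ : ℝ) (hβ : 0 ≤ β) (hε : 0 ≤ ε)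
    (lam : ℝ → ℝ) (hlam : ∀ τ, |lam τ| ≤ lamBar)
    (rbar rhat Gbar Ghat : ℝ × ℝ → ℝ)
    (hr : ∀ p, |rhat p - rbar p| ≤ ε) (hG : ∀ p, |Ghat p - Gbar p| ≤ ε)
    (Y : Set (ℝ × ℝ)) (hYsub : ∀ p ∈ Y, p.2 ∈ Ioo (0 : ℝ) T)
    (u : ℝ × ℝ → ℝ)
    (huLip : ∀ z₁ z₂ τ : ℝ, |u (z₁, τ) - u (z₂, τ)| ≤ L₁ * |z₁ - z₂|)
    (husol : IsViscositySolnOn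
      (fun y _ p => p.2 +
        (-(Real.exp (β * y.2)) * lam y.2 * rbar y - lam y.2 * Gbar y * p.1))
      u Y) :
    ∀ C : ℝ, lamBar * (Real.exp (β * T) + L₁) ≤ C →
      IsViscositySupersolnOn
        (fun y _ p => p.2 +
          (-(Real.exp (β * y.2)) * lam y.2 * rhat y - lam y.2 * Ghat y * p.1))
        (fun y => u y + C * ε * y.2) Y := by
  intro C hC
  refine ⟨husol.2.1.add (continuousOn_const.mul continuousOn_snd), fun φ hφ y hy hmin => ?_⟩
  have hsuper := husol.2.nonneg_of_isLocalMin_add (contDiff_const.mul contDiff_snd) hφ hy hmin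
  simp only [fderiv_const_mul_snd, smul_apply, ContinuousLinearMap.coe_snd', smul_eq_mul, mul_one,
    neg_mul, mul_zero, sub_zero] at hsuper
  have hgrad : |fderiv ℝ φ y (1, 0)| ≤ L₁ := by
    refine abs_fderiv_fst_le_of_isLocalMin (fun z₁ z₂ τ => ?_)
      (hφ.differentiable two_ne_zero y) hmin
    simpa only [add_sub_add_right_eq_sub] using huLip z₁ z₂ τ
  have hH := abs_hamiltonian_sub_le hβ (hYsub y hy).2.le (hlam y.2) (hr y) (hG y) hgrad
  have hCε := mul_le_mul_of_nonneg_right hC hε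
  unfold hamiltonian at hH
  linarith [(abs_le.1 hH).1]

/-- The key perturbation step in the proof of Theorem 1 (Dirichlet case): if `u` is a
viscosity solution of `∂_τ f + H(z,τ,∂_z f) = 0` on `Υ ⊆ ℝ × (0,T)`, where
`H(z,τ,p) = −e^{βτ} λ(τ) r̄(z,τ) − λ(τ) Ḡ(z,τ) p`, `u` is `L₁`-Lipschitz in `z`, and the
perturbed coefficients satisfy `‖r̂ − r̄‖_∞ ≤ ε`, `‖Ĝ − Ḡ‖_∞ ≤ ε`, then for every
`C ≥ λ̄ (e^{βT} + L₁)`, the function `(z,τ) ↦ u(z,τ) + C ε τ` is a viscosity supersolution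
of `∂_τ f + Ĥ(z,τ,∂_z f) = 0` on `Υ`. -/
theorem stmt_8 (β T ε lamBar L₁ : ℝ) (hβ : 0 ≤ β) (hT : 0 < T) (hε : 0 ≤ ε)
    (hlamBar : 0 ≤ lamBar) (hL₁ : 0 ≤ L₁)
    (lam : ℝ → ℝ) (hlam : ∀ τ, |lam τ| ≤ lamBar)
    (rbar rhat Gbar Ghat : ℝ × ℝ → ℝ)
    (hr : ∀ p, |rhat p - rbar p| ≤ ε) (hG : ∀ p, |Ghat p - Gbar p| ≤ ε)
    (Y : Set (ℝ × ℝ)) (hYopen : IsOpen Y) (hYsub : ∀ p ∈ Y, p.2 ∈ Ioo (0 : ℝ) T)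
    (u : ℝ × ℝ → ℝ) (hu : Continuous u)
    (huLip : ∀ z₁ z₂ τ : ℝ, |u (z₁, τ) - u (z₂, τ)| ≤ L₁ * |z₁ - z₂|)
    (husol : IsViscositySolnOn
      (fun y _ p => p.2 +
        (-(Real.exp (β * y.2)) * lam y.2 * rbar y - lam y.2 * Gbar y * p.1))
      u Y) :
    ∀ C : ℝ, lamBar * (Real.exp (β * T) + L₁) ≤ C →
      IsViscositySupersolnOn
        (fun y _ p => p.2 +
          (-(Real.exp (β * y.2)) * lam y.2 * rhat y - lam y.2 * Ghat y * p.1))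
        (fun y => u y + C * ε * y.2) Y :=
  stmt_8_general β T ε lamBar L₁ hβ hε lam hlam rbar rhat Gbar Ghat hr hG Y hYsub u huLip husol
end

section
/- Let β ≥ 0, z₀ > 0, c ∈ (0, 1], and R, B ∈ [0, ∞), ε ≥ 0. Let r̄, r̂, π̄, π̂ : [0, z₀] → ℝ be continuous functions with c ≤ π̄(z) ≤ 1, c ≤ π̂(z) ≤ 1, |r̄(z)| ≤ R, |r̂(z)| ≤ R, |r̄(z) − r̂(z)| ≤ ε and |π̄(z) − π̂(z)| ≤ ε for all z ∈ [0, z₀]. Let h, ĥ : [0, z₀] → ℝ be differentiable functions with h(0) = ĥ(0) = 0 satisfying β·h(z) = r̄(z) − π̄(z)·h′(z) and β·ĥ(z) = r̂(z) − π̂(z)·ĥ′(z) for all z ∈ [0, z₀], and suppose |ĥ(z)| ≤ B for all z ∈ [0, z₀]. Then sup_{z ∈ [0, z₀]} |h(z) − ĥ(z)| ≤ M₁·ε, where M₁ := z₀·(1 + R + β·B)·c^{−2}·e^{β·z₀/c}. -/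
open Set Real

/-!
The difference `u = h - ĥ` vanishes at `0`, and subtracting the two ODEs solved for `h′` and
`ĥ′` gives `|u′| ≤ (β / c) |u| + (1 + R + β B) ε / c²`: the first term comes from `β u / π̄`,
the rest from `r̄ - r̂` and from `π̂ - π̄`, with `|r̂ - β ĥ| ≤ R + β B`. Grönwall's inequality
then bounds `|u(z)|` by `E z₀ e^{β z₀ / c}` with `E = (1 + R + β B) ε / c²`, using
`e^y - 1 ≤ y e^y`.
-/

lemma exp_sub_one_le_mul_exp (y : ℝ) : exp y - 1 ≤ y * exp y := by
  have h := one_sub_inv_le_log_of_pos (exp_pos y)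
  rw [log_exp] at h
  have h' := mul_le_mul_of_nonneg_right h (exp_pos y).le
  rwa [sub_mul, one_mul, inv_mul_cancel₀ (exp_ne_zero y)] at h'

lemma gronwallBound_zero_le {K ε x : ℝ} (hK : 0 ≤ K) (hε : 0 ≤ ε) :
    gronwallBound 0 K ε x ≤ ε * x * exp (K * x) := by
  rcases hK.eq_or_lt with rfl | hK
  · simp [gronwallBound_K0]
  · simp only [gronwallBound_of_K_ne_0 hK.ne', zero_mul, zero_add]
    calc ε / K * (exp (K * x) - 1) ≤ ε / K * (K * x * exp (K * x)) := by
          gcongr; exact exp_sub_one_le_mul_exp _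
      _ = ε * x * exp (K * x) := by field_simp

theorem norm_le_gronwallBound_of_hasDerivWithinAt_Icc {E : Type*} [NormedAddCommGroup E]
    [NormedSpace ℝ E] {f f' : ℝ → E} {δ K ε a b : ℝ}
    (hf : ∀ x ∈ Icc a b, HasDerivWithinAt f (f' x) (Icc a b) x) (ha : ‖f a‖ ≤ δ)
    (bound : ∀ x ∈ Ico a b, ‖f' x‖ ≤ K * ‖f x‖ + ε) :
    ∀ x ∈ Icc a b, ‖f x‖ ≤ gronwallBound δ K ε (x - a) :=
  norm_le_gronwallBound_of_norm_deriv_right_le (fun x hx => (hf x hx).continuousWithinAt)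
    (fun x hx => (hf x (Ico_subset_Icc_self hx)).mono_of_mem_nhdsWithin
      (Icc_mem_nhdsGE_of_mem hx)) ha bound

lemma sub_eq_of_mul_eq_sub_mul {β x y x' y' r s p q : ℝ} (hp : p ≠ 0) (hq : q ≠ 0)
    (hx : β * x = r - p * x') (hy : β * y = s - q * y') :
    x' - y' = (r - s - β * (x - y)) / p + (s - β * y) * (q - p) / (p * q) := by
  have hx' : x' = (r - β * x) / p := by field_simp; linarith
  have hy' : y' = (s - β * y) / q := by field_simp; linarith
  rw [hx', hy']
  field_simp
  ring

lemma abs_sub_le_of_mul_eq_sub_mul {β c ε R B x y x' y' r s p q : ℝ} (hβ : 0 ≤ β)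
    (hc0 : 0 < c) (hc1 : c ≤ 1) (hp : c ≤ p) (hq : c ≤ q) (hrs : |r - s| ≤ ε)
    (hpq : |p - q| ≤ ε) (hs : |s| ≤ R) (hyB : |y| ≤ B)
    (hx : β * x = r - p * x') (hy : β * y = s - q * y') :
    |x' - y'| ≤ β / c * |x - y| + (1 + R + β * B) / c ^ 2 * ε := by
  have hp0 : 0 < p := hc0.trans_le hp
  have hq0 : 0 < q := hc0.trans_le hq
  have hε : 0 ≤ ε := (abs_nonneg _).trans hrs
  have hR : 0 ≤ R := (abs_nonneg _).trans hs
  have hB : 0 ≤ B := (abs_nonneg _).trans hyB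
  have hsy : |s - β * y| ≤ R + β * B := by
    calc |s - β * y| ≤ |s| + β * |y| := by
          simpa [abs_mul, abs_of_nonneg hβ] using abs_sub s (β * y)
      _ ≤ R + β * B := by gcongr
  have hfirst : |r - s - β * (x - y)| / p ≤ (ε + β * |x - y|) / c := by
    have : |r - s - β * (x - y)| ≤ ε + β * |x - y| := by
      calc |r - s - β * (x - y)| ≤ |r - s| + β * |x - y| := by
            simpa [abs_mul, abs_of_nonneg hβ] using abs_sub (r - s) (β * (x - y))
        _ ≤ ε + β * |x - y| := by gcongr
    exact div_le_div₀ (by positivity) this hc0 hp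
  have hsecond : |s - β * y| * |q - p| / (p * q) ≤ (R + β * B) * ε / c ^ 2 := by
    rw [abs_sub_comm q p]
    exact div_le_div₀ (by positivity) (mul_le_mul hsy hpq (abs_nonneg _) (by positivity))
      (by positivity) (by rw [sq]; gcongr)
  have hc2 : ε / c ≤ ε / c ^ 2 :=
    div_le_div_of_nonneg_left hε (by positivity) (by nlinarith)
  rw [sub_eq_of_mul_eq_sub_mul hp0.ne' hq0.ne' hx hy]
  calc _ ≤ |r - s - β * (x - y)| / p + |s - β * y| * |q - p| / (p * q) := by
        refine (abs_add_le _ _).trans_eq ?_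
        rw [abs_div, abs_div, abs_mul, abs_of_pos hp0, abs_of_pos (mul_pos hp0 hq0)]
    _ ≤ (ε + β * |x - y|) / c + (R + β * B) * ε / c ^ 2 := add_le_add hfirst hsecond
    _ ≤ β / c * |x - y| + (1 + R + β * B) / c ^ 2 * ε := by
        rw [add_div ε]
        linarith [show (1 + R + β * B) / c ^ 2 * ε = ε / c ^ 2 + (R + β * B) * ε / c ^ 2 by ring,
          show β * |x - y| / c = β / c * |x - y| by ring]

theorem stmt_9_general (β z₀ c R B ε : ℝ) (hβ : 0 ≤ β)
    (hc0 : 0 < c) (hc1 : c ≤ 1) (hR : 0 ≤ R) (hB : 0 ≤ B) (hε : 0 ≤ ε)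
    (rbar rhat pibar pihat : ℝ → ℝ)
    (hpibar : ∀ z ∈ Icc 0 z₀, c ≤ pibar z ∧ pibar z ≤ 1)
    (hpihat : ∀ z ∈ Icc 0 z₀, c ≤ pihat z ∧ pihat z ≤ 1)
    (hrhatB : ∀ z ∈ Icc 0 z₀, |rhat z| ≤ R)
    (hrε : ∀ z ∈ Icc 0 z₀, |rbar z - rhat z| ≤ ε)
    (hπε : ∀ z ∈ Icc 0 z₀, |pibar z - pihat z| ≤ ε)
    (h hhat h' hhat' : ℝ → ℝ)
    (hh0 : h 0 = 0) (hhat0 : hhat 0 = 0)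
    (hderiv : ∀ z ∈ Icc 0 z₀, HasDerivWithinAt h (h' z) (Icc 0 z₀) z)
    (hode : ∀ z ∈ Icc 0 z₀, β * h z = rbar z - pibar z * h' z)
    (hderivhat : ∀ z ∈ Icc 0 z₀, HasDerivWithinAt hhat (hhat' z) (Icc 0 z₀) z)
    (hodehat : ∀ z ∈ Icc 0 z₀, β * hhat z = rhat z - pihat z * hhat' z)
    (hhatB : ∀ z ∈ Icc 0 z₀, |hhat z| ≤ B) :
    ∀ z ∈ Icc 0 z₀,
      |h z - hhat z| ≤ z₀ * (1 + R + β * B) / c ^ 2 * Real.exp (β * z₀ / c) * ε := by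
  set E := (1 + R + β * B) / c ^ 2 * ε
  have hderiv_le : ∀ t ∈ Ico 0 z₀, |h' t - hhat' t| ≤ β / c * |h t - hhat t| + E := by
    intro t ht
    replace ht := Ico_subset_Icc_self ht
    exact abs_sub_le_of_mul_eq_sub_mul hβ hc0 hc1 (hpibar t ht).1 (hpihat t ht).1 (hrε t ht)
      (hπε t ht) (hrhatB t ht) (hhatB t ht) (hode t ht) (hodehat t ht)
  have hgron := norm_le_gronwallBound_of_hasDerivWithinAt_Icc (δ := 0)
    (fun t ht => (hderiv t ht).sub (hderivhat t ht)) (by simp [hh0, hhat0]) hderiv_le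
  intro z hz
  calc |h z - hhat z| ≤ gronwallBound 0 (β / c) E z := by simpa using hgron z hz
    _ ≤ gronwallBound 0 (β / c) E z₀ :=
        gronwallBound_mono le_rfl (by positivity) (by positivity) hz.2
    _ ≤ E * z₀ * exp (β / c * z₀) := gronwallBound_zero_le (by positivity) (by positivity)
    _ = z₀ * (1 + R + β * B) / c ^ 2 * exp (β * z₀ / c) * ε := by simp only [E]; ring_nf

/-- Regret-type stability bound for the ODE of Section 2: if `h` and `ĥ` solve
`β h = r̄ − π̄ h′` and `β ĥ = r̂ − π̂ ĥ′` on `[0, z₀]` with `h 0 = ĥ 0 = 0`, where the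
coefficient pairs are within `ε` in sup norm, `c ≤ π̄, π̂ ≤ 1`, `|r̄|, |r̂| ≤ R` and
`|ĥ| ≤ B`, then `sup_{[0,z₀]} |h − ĥ| ≤ M₁ ε` with
`M₁ = z₀ (1 + R + β B) c⁻² e^{β z₀ / c}`. -/
theorem stmt_9 (β z₀ c R B ε : ℝ) (hβ : 0 ≤ β) (hz₀ : 0 < z₀)
    (hc0 : 0 < c) (hc1 : c ≤ 1) (hR : 0 ≤ R) (hB : 0 ≤ B) (hε : 0 ≤ ε)
    (rbar rhat pibar pihat : ℝ → ℝ)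
    (hrbarC : ContinuousOn rbar (Icc 0 z₀)) (hrhatC : ContinuousOn rhat (Icc 0 z₀))
    (hpibarC : ContinuousOn pibar (Icc 0 z₀)) (hpihatC : ContinuousOn pihat (Icc 0 z₀))
    (hpibar : ∀ z ∈ Icc 0 z₀, c ≤ pibar z ∧ pibar z ≤ 1)
    (hpihat : ∀ z ∈ Icc 0 z₀, c ≤ pihat z ∧ pihat z ≤ 1)
    (hrbarB : ∀ z ∈ Icc 0 z₀, |rbar z| ≤ R) (hrhatB : ∀ z ∈ Icc 0 z₀, |rhat z| ≤ R)
    (hrε : ∀ z ∈ Icc 0 z₀, |rbar z - rhat z| ≤ ε)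
    (hπε : ∀ z ∈ Icc 0 z₀, |pibar z - pihat z| ≤ ε)
    (h hhat h' hhat' : ℝ → ℝ)
    (hh0 : h 0 = 0) (hhat0 : hhat 0 = 0)
    (hderiv : ∀ z ∈ Icc 0 z₀, HasDerivWithinAt h (h' z) (Icc 0 z₀) z)
    (hode : ∀ z ∈ Icc 0 z₀, β * h z = rbar z - pibar z * h' z)
    (hderivhat : ∀ z ∈ Icc 0 z₀, HasDerivWithinAt hhat (hhat' z) (Icc 0 z₀) z)
    (hodehat : ∀ z ∈ Icc 0 z₀, β * hhat z = rhat z - pihat z * hhat' z)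
    (hhatB : ∀ z ∈ Icc 0 z₀, |hhat z| ≤ B) :
    ∀ z ∈ Icc 0 z₀,
      |h z - hhat z| ≤ z₀ * (1 + R + β * B) / c ^ 2 * Real.exp (β * z₀ / c) * ε :=
  stmt_9_general β z₀ c R B ε hβ hc0 hc1 hR hB hε rbar rhat pibar pihat hpibar hpihat hrhatB hrε hπε
    h hhat h' hhat' hh0 hhat0 hderiv hode hderivhat hodehat hhatB
end

section
/- Let β ≥ 0, z₀ > 0, and c ∈ (0, 1]. Let r, π : ℝ → ℝ be bounded and Lipschitz continuous with c ≤ π(z) ≤ 1 for all z. Let h : [0, z₀] → ℝ be a differentiable function with h(0) = 0 satisfying β·h(z) = r(z) − π(z)·h′(z) for all z ∈ [0, z₀]. For b > 0 define h̃_b : ℝ → ℝ by h̃_b(z) = 0 for z < 1/b, and for z ≥ 1/b by the recursion h̃_b(z) = r(z)/b + (1 − β/b)·{h̃_b(z − 1/b)·π(z) + h̃_b(z)·(1 − π(z))}, i.e., h̃_b(z) = [r(z)/b + (1 − β/b)·π(z)·h̃_b(z − 1/b)] / [1 − (1 − β/b)·(1 − π(z))]. Then there exist constants C < ∞ and b₀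 < ∞, depending only on β, z₀, c, and the bounds and Lipschitz constants of r and π, such that for all b ≥ b₀, sup_{z ∈ [0, z₀]} |h̃_b(z) − h(z)| ≤ C/b. -/
/-!
By the ODE, `c |h'| ≤ π |h'| = |r - β h| ≤ R + β |h|`, so Grönwall bounds `h` on `[0, z₀]`;
hence `h` is Lipschitz, and so is `h' = (r - β h) / π`. A first-order Taylor estimate then
shows that `h` satisfies the discrete recursion up to a residual of order `1 / b²`. The
recursion is stable: with denominator `D = 1 - (1 - β/b)(1 - π) ≥ c`, the error is propagated
with the factor `(1 - β/b) π / D ≤ 1` and receives at most `residual / c` per step. Summing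
over the at most `z₀ b` steps of size `1 / b` gives an error of order `1 / b`.
-/

open Set

lemma abs_div_sub_div_le {a a' p p' c La Lp A d : ℝ} (hc : 0 < c) (hp : c ≤ p) (hp' : c ≤ p')
    (hp'1 : p' ≤ 1) (ha : |a - a'| ≤ La * d) (hpp : |p - p'| ≤ Lp * d) (ha' : |a'| ≤ A) :
    |a / p - a' / p'| ≤ (La + A * Lp) / c ^ 2 * d := by
  have hpos : 0 < p := hc.trans_le hp
  have hpos' : 0 < p' := hc.trans_le hp'
  have hnum : |p' * (a - a') + a' * (p' - p)| ≤ (La + A * Lp) * d := by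
    calc |p' * (a - a') + a' * (p' - p)| ≤ |p'| * |a - a'| + |a'| * |p' - p| := by
          rw [← abs_mul, ← abs_mul]; exact abs_add_le _ _
      _ ≤ 1 * (La * d) + A * (Lp * d) := by
          rw [abs_sub_comm p' p, abs_of_pos hpos']
          gcongr
          exact (abs_nonneg _).trans ha'
      _ = (La + A * Lp) * d := by ring
  calc |a / p - a' / p'| = |p' * (a - a') + a' * (p' - p)| / (p * p') := by
        rw [div_sub_div _ _ hpos.ne' hpos'.ne', abs_div, abs_of_pos (mul_pos hpos hpos')]
        ring_nf
    _ ≤ (La + A * Lp) * d / c ^ 2 := by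
        gcongr
        · exact (abs_nonneg _).trans hnum
        · nlinarith
    _ = (La + A * Lp) / c ^ 2 * d := by ring

lemma abs_sub_sub_mul_deriv_le {f f' : ℝ → ℝ} {a b L : ℝ} (hab : a ≤ b)
    (hf : ∀ x ∈ Icc a b, HasDerivWithinAt f (f' x) (Icc a b) x)
    (hf' : ∀ x ∈ Icc a b, |f' x - f' b| ≤ L * (b - a)) :
    |f b - f a - (b - a) * f' b| ≤ L * (b - a) ^ 2 := by
  have hg : ∀ x ∈ Icc a b,
      HasDerivWithinAt (fun x => f x - f' b * x) (f' x - f' b) (Icc a b) x := fun x hx =>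
    ((hf x hx).sub ((hasDerivWithinAt_id x (Icc a b)).const_mul (f' b))).congr_deriv (by ring)
  have := (convex_Icc a b).norm_image_sub_le_of_norm_hasDerivWithin_le hg hf'
    (left_mem_Icc.2 hab) (right_mem_Icc.2 hab)
  rw [Real.norm_eq_abs, Real.norm_eq_abs, abs_of_nonneg (sub_nonneg.2 hab)] at this
  calc |f b - f a - (b - a) * f' b| = |f b - f' b * b - (f a - f' b * a)| := by ring_nf
    _ ≤ L * (b - a) * (b - a) := this
    _ = L * (b - a) ^ 2 := by ring

lemma abs_sub_le_of_recursion {q p c s x x₀ y y₀ : ℝ} (hq0 : 0 ≤ q) (hq1 : q ≤ 1) (hc : 0 < c)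
    (hcp : c ≤ p) (hp1 : p ≤ 1)
    (hx : x = (s + (1 - q) * p * x₀) / (1 - (1 - q) * (1 - p))) :
    |x - y| ≤ |x₀ - y₀| + |(1 - (1 - q) * (1 - p)) * y - (s + (1 - q) * p * y₀)| / c := by
  set D := 1 - (1 - q) * (1 - p)
  set τ := D * y - (s + (1 - q) * p * y₀)
  have hcD : c ≤ D := by nlinarith
  have hD : 0 < D := hc.trans_le hcD
  have ha : 0 ≤ (1 - q) * p := by nlinarith
  have herr : (x - y) * D = (1 - q) * p * (x₀ - y₀) - τ := by
    rw [hx, sub_mul, div_mul_cancel₀ _ hD.ne']; ring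
  have : |x - y| * D ≤ D * |x₀ - y₀| + |τ| := by
    rw [← abs_of_pos hD, ← abs_mul, herr, abs_of_pos hD]
    calc |(1 - q) * p * (x₀ - y₀) - τ| ≤ (1 - q) * p * |x₀ - y₀| + |τ| := by
          simpa only [abs_mul, abs_of_nonneg ha] using abs_sub ((1 - q) * p * (x₀ - y₀)) τ
      _ ≤ D * |x₀ - y₀| + |τ| := by gcongr; linarith
  calc |x - y| ≤ |x₀ - y₀| + |τ| / D := by
        rw [← sub_le_iff_le_add', le_div_iff₀ hD]; linarith
    _ ≤ |x₀ - y₀| + |τ| / c := by gcongr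

lemma le_add_div_mul_of_step_le {e : ℝ → ℝ} {z₀ δ A B : ℝ} (hδ : 0 < δ) (hB : 0 ≤ B)
    (hbase : ∀ z ∈ Icc 0 z₀, z < δ → e z ≤ A)
    (hstep : ∀ z ∈ Icc 0 z₀, δ ≤ z → e z ≤ e (z - δ) + B) :
    ∀ z ∈ Icc 0 z₀, e z ≤ A + z / δ * B := by
  have key : ∀ n : ℕ, ∀ z ∈ Icc 0 z₀, z < (n + 1) * δ → e z ≤ A + n * B := by
    intro n
    induction n with
    | zero => simpa using hbase
    | succ n ih =>
      intro z hz hlt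
      push_cast at hlt ⊢
      rcases lt_or_ge z δ with hzδ | hδz
      · nlinarith [hbase z hz hzδ]
      · have := ih (z - δ) ⟨by linarith, by linarith [hz.2]⟩ (by linarith)
        linarith [hstep z hz hδz]
  intro z hz
  have hn : (⌊z / δ⌋₊ : ℝ) ≤ z / δ := Nat.floor_le (div_nonneg hz.1 hδ.le)
  calc e z ≤ A + ⌊z / δ⌋₊ * B :=
        key _ z hz (by rw [← div_lt_iff₀ hδ]; exact Nat.lt_floor_add_one _)
    _ ≤ A + z / δ * B := by gcongr

section ODE

variable {β c R Lr Lπ z₀ H M L : ℝ} {r π h h' : ℝ → ℝ}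

lemma abs_deriv_le_of_ode {z : ℝ} (hβ : 0 ≤ β) (hc : 0 < c) (hr : |r z| ≤ R) (hπ : c ≤ π z)
    (hode : β * h z = r z - π z * h' z) : |h' z| ≤ (R + β * |h z|) / c := by
  rw [le_div_iff₀ hc]
  calc |h' z| * c ≤ |π z * h' z| := by
        rw [abs_mul, abs_of_pos (hc.trans_le hπ), mul_comm]
        exact mul_le_mul_of_nonneg_right hπ (abs_nonneg _)
    _ = |r z - β * h z| := by rw [show π z * h' z = r z - β * h z by linarith]
    _ ≤ |r z| + |β * h z| := abs_sub _ _
    _ ≤ R + β * |h z| := by rw [abs_mul, abs_of_nonneg hβ]; linarith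

lemma abs_le_gronwallBound_of_ode (hβ : 0 ≤ β) (hc : 0 < c) (hR : 0 ≤ R)
    (hr : ∀ z, |r z| ≤ R) (hπ : ∀ z, c ≤ π z) (h0 : h 0 = 0)
    (hderiv : ∀ z ∈ Icc 0 z₀, HasDerivWithinAt h (h' z) (Icc 0 z₀) z)
    (hode : ∀ z ∈ Icc 0 z₀, β * h z = r z - π z * h' z) :
    ∀ z ∈ Icc 0 z₀, |h z| ≤ gronwallBound 0 (β / c) (R / c) z₀ := by
  have hderiv_right : ∀ z ∈ Ico 0 z₀, HasDerivWithinAt h (h' z) (Ici z) z := fun z hz =>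
    (hderiv z (Ico_subset_Icc_self hz)).mono_of_mem_nhdsWithin
      (Filter.mem_of_superset (Icc_mem_nhdsGE hz.2) (Icc_subset_Icc_left hz.1))
  have hbound : ∀ z ∈ Ico 0 z₀, ‖h' z‖ ≤ β / c * ‖h z‖ + R / c := fun z hz => by
    have := abs_deriv_le_of_ode hβ hc (hr z) (hπ z) (hode z (Ico_subset_Icc_self hz))
    rw [Real.norm_eq_abs, Real.norm_eq_abs]
    linarith [show (R + β * |h z|) / c = β / c * |h z| + R / c by ring]
  intro z hz
  calc |h z| ≤ gronwallBound 0 (β / c) (R / c) (z - 0) :=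
        norm_le_gronwallBound_of_norm_deriv_right_le (fun z hz => (hderiv z hz).continuousWithinAt)
          hderiv_right (by simp [h0]) hbound z hz
    _ ≤ gronwallBound 0 (β / c) (R / c) z₀ :=
        gronwallBound_mono le_rfl (by positivity) (by positivity) (by linarith [hz.2])

lemma abs_sub_le_of_ode (hβ : 0 ≤ β) (hc : 0 < c)
    (hr : ∀ z, |r z| ≤ R) (hπ : ∀ z, c ≤ π z)
    (hderiv : ∀ z ∈ Icc 0 z₀, HasDerivWithinAt h (h' z) (Icc 0 z₀) z)
    (hode : ∀ z ∈ Icc 0 z₀, β * h z = r z - π z * h' z) (hH : ∀ z ∈ Icc 0 z₀, |h z| ≤ H) :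
    ∀ z ∈ Icc 0 z₀, ∀ w ∈ Icc 0 z₀, |h z - h w| ≤ (R + β * H) / c * |z - w| := by
  intro z hz w hw
  refine (convex_Icc 0 z₀).norm_image_sub_le_of_norm_hasDerivWithin_le hderiv (fun x hx => ?_) hw hz
  calc ‖h' x‖ ≤ (R + β * |h x|) / c := abs_deriv_le_of_ode hβ hc (hr x) (hπ x) (hode x hx)
    _ ≤ (R + β * H) / c := by gcongr; exact hH x hx

lemma abs_deriv_sub_le_of_ode (hβ : 0 ≤ β) (hc : 0 < c) (hr : ∀ z, |r z| ≤ R)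
    (hrL : ∀ z w, |r z - r w| ≤ Lr * |z - w|)
    (hπ : ∀ z, c ≤ π z ∧ π z ≤ 1) (hπL : ∀ z w, |π z - π w| ≤ Lπ * |z - w|)
    (hode : ∀ z ∈ Icc 0 z₀, β * h z = r z - π z * h' z) (hH : ∀ z ∈ Icc 0 z₀, |h z| ≤ H)
    (hM : ∀ z ∈ Icc 0 z₀, ∀ w ∈ Icc 0 z₀, |h z - h w| ≤ M * |z - w|) :
    ∀ z ∈ Icc 0 z₀, ∀ w ∈ Icc 0 z₀,
      |h' z - h' w| ≤ (Lr + β * M + Lπ * (R + β * H)) / c ^ 2 * |z - w| := by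
  have h'_eq : ∀ z ∈ Icc 0 z₀, h' z = (r z - β * h z) / π z := fun z hz => by
    rw [eq_div_iff (hc.trans_le (hπ z).1).ne']
    linarith [hode z hz]
  intro z hz w hw
  rw [h'_eq z hz, h'_eq w hw]
  convert abs_div_sub_div_le (La := Lr + β * M) (A := R + β * H) hc (hπ z).1 (hπ w).1 (hπ w).2
    ?_ (hπL z w) ?_ using 3
  · ring
  · calc |r z - β * h z - (r w - β * h w)| = |r z - r w - β * (h z - h w)| := by ring_nf
      _ ≤ |r z - r w| + β * |h z - h w| := by
          simpa only [abs_mul, abs_of_nonneg hβ] using abs_sub (r z - r w) (β * (h z - h w))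
      _ ≤ Lr * |z - w| + β * (M * |z - w|) := by gcongr; exacts [hrL z w, hM z hz w hw]
      _ = (Lr + β * M) * |z - w| := by ring
  · calc |r w - β * h w| ≤ |r w| + β * |h w| := by
          simpa only [abs_mul, abs_of_nonneg hβ] using abs_sub (r w) (β * h w)
      _ ≤ R + β * H := by gcongr; exacts [hr w, hH w hw]

lemma abs_consistency_error_le {b z : ℝ} (hβ : 0 ≤ β) (hb : 0 < b)
    (hπ : 0 ≤ π z ∧ π z ≤ 1) (hL : 0 ≤ L)
    (hderiv : ∀ z ∈ Icc 0 z₀, HasDerivWithinAt h (h' z) (Icc 0 z₀) z)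
    (hode : β * h z = r z - π z * h' z)
    (hM : ∀ z ∈ Icc 0 z₀, ∀ w ∈ Icc 0 z₀, |h z - h w| ≤ M * |z - w|)
    (hL' : ∀ z ∈ Icc 0 z₀, ∀ w ∈ Icc 0 z₀, |h' z - h' w| ≤ L * |z - w|)
    (hz : z ∈ Icc 0 z₀) (hzb : 1 / b ≤ z) :
    |(1 - (1 - β / b) * (1 - π z)) * h z - (r z / b + (1 - β / b) * π z * h (z - 1 / b))|
      ≤ (L + β * M) / b ^ 2 := by
  have hb' : 0 < 1 / b := by positivity
  have hsub : Icc (z - 1 / b) z ⊆ Icc 0 z₀ := Icc_subset_Icc (by linarith) hz.2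
  have hz' : z - 1 / b ∈ Icc 0 z₀ := hsub (left_mem_Icc.2 (by linarith))
  have htaylor : |h z - h (z - 1 / b) - 1 / b * h' z| ≤ L * (1 / b) ^ 2 := by
    have := abs_sub_sub_mul_deriv_le (f := h) (by linarith : z - 1 / b ≤ z)
      (fun x hx => (hderiv x (hsub hx)).mono hsub) fun x hx =>
        (hL' x (hsub hx) z hz).trans <| by
          gcongr
          rw [abs_sub_comm, abs_of_nonneg (by linarith [hx.2])]
          linarith [hx.1]
    rwa [sub_sub_cancel] at this
  have hlip : |h z - h (z - 1 / b)| ≤ M * (1 / b) := by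
    simpa only [sub_sub_cancel, abs_of_pos hb'] using hM z hz _ hz'
  have hr : r z = β * h z + π z * h' z := by linarith
  calc |(1 - (1 - β / b) * (1 - π z)) * h z - (r z / b + (1 - β / b) * π z * h (z - 1 / b))|
      = |π z * (h z - h (z - 1 / b) - 1 / b * h' z) - β / b * π z * (h z - h (z - 1 / b))| := by
        rw [hr]; ring_nf
    _ ≤ π z * |h z - h (z - 1 / b) - 1 / b * h' z| + β / b * π z * |h z - h (z - 1 / b)| := by
        have : 0 ≤ β / b := by positivity
        simpa only [abs_mul, abs_of_nonneg hπ.1, abs_of_nonneg this] using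
          abs_sub (π z * (h z - h (z - 1 / b) - 1 / b * h' z)) (β / b * π z * (h z - h (z - 1 / b)))
    _ ≤ 1 * (L * (1 / b) ^ 2) + β / b * 1 * (M * (1 / b)) := by
        gcongr
        exacts [hπ.2, hπ.2]
    _ = (L + β * M) / b ^ 2 := by field_simp

end ODE

theorem stmt_10_general (β z₀ c R Lr Lπ : ℝ) (hβ : 0 ≤ β) (hz₀ : 0 < z₀)
    (hc0 : 0 < c) (hR : 0 ≤ R) (hLr : 0 ≤ Lr) (hLπ : 0 ≤ Lπ) :
    ∃ C b₀ : ℝ, ∀ r π : ℝ → ℝ,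
      (∀ z, |r z| ≤ R) → (∀ z w, |r z - r w| ≤ Lr * |z - w|) →
      (∀ z, c ≤ π z ∧ π z ≤ 1) → (∀ z w, |π z - π w| ≤ Lπ * |z - w|) →
      ∀ h h' : ℝ → ℝ, h 0 = 0 →
        (∀ z ∈ Icc 0 z₀, HasDerivWithinAt h (h' z) (Icc 0 z₀) z) →
        (∀ z ∈ Icc 0 z₀, β * h z = r z - π z * h' z) →
        ∀ b : ℝ, b₀ ≤ b → 0 < b →
          ∀ htil : ℝ → ℝ,
            (∀ z, z < 1 / b → htil z = 0) →
            (∀ z, 1 / b ≤ z →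
              htil z = (r z / b + (1 - β / b) * π z * htil (z - 1 / b)) /
                (1 - (1 - β / b) * (1 - π z))) →
            ∀ z ∈ Icc 0 z₀, |htil z - h z| ≤ C / b := by
  set H := gronwallBound 0 (β / c) (R / c) z₀
  set M := (R + β * H) / c
  set L := (Lr + β * M + Lπ * (R + β * H)) / c ^ 2
  refine ⟨M + z₀ * ((L + β * M) / c), β, ?_⟩
  intro r π hr hrL hπ hπL h h' h0 hderiv hode b hβb hb htil htil0 htilrec
  have hH0 : 0 ≤ H := by
    simpa [gronwallBound_x0] using gronwallBound_mono le_rfl (by positivity) (by positivity) hz₀.le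
  have hH := abs_le_gronwallBound_of_ode hβ hc0 hR hr (fun z => (hπ z).1) h0 hderiv hode
  have hM := abs_sub_le_of_ode hβ hc0 hr (fun z => (hπ z).1) hderiv hode hH
  have hL := abs_deriv_sub_le_of_ode hβ hc0 hr hrL hπ hπL hode hH hM
  have hbase : ∀ z ∈ Icc 0 z₀, z < 1 / b → |htil z - h z| ≤ M * (1 / b) := fun z hz hzb => by
    calc |htil z - h z| = |h z - h 0| := by rw [htil0 z hzb, h0, zero_sub, abs_neg, sub_zero]
      _ ≤ M * |z - 0| := hM z hz 0 (left_mem_Icc.2 hz₀.le)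
      _ ≤ M * (1 / b) := by rw [sub_zero, abs_of_nonneg hz.1]; gcongr
  have hstep : ∀ z ∈ Icc 0 z₀, 1 / b ≤ z →
      |htil z - h z| ≤ |htil (z - 1 / b) - h (z - 1 / b)| + (L + β * M) / b ^ 2 / c :=
    fun z hz hzb => (abs_sub_le_of_recursion (div_nonneg hβ hb.le) ((div_le_one hb).2 hβb) hc0
      (hπ z).1 (hπ z).2 (htilrec z hzb)).trans <| by
        gcongr
        exact abs_consistency_error_le hβ hb ⟨hc0.le.trans (hπ z).1, (hπ z).2⟩ (by positivity)
          hderiv (hode z hz) hM hL hz hzb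
  intro z hz
  calc |htil z - h z| ≤ M * (1 / b) + z / (1 / b) * ((L + β * M) / b ^ 2 / c) :=
        le_add_div_mul_of_step_le (e := fun z => |htil z - h z|) (by positivity) (by positivity)
          hbase hstep z hz
    _ = (M + z * ((L + β * M) / c)) / b := by field_simp
    _ ≤ (M + z₀ * ((L + β * M) / c)) / b := by gcongr; exact hz.2

/-- Discretization error bound of Section 2.4: the solution `h̃_b` of the discretized
recursion with normalizing factor `b` approximates the solution `h` of the continuum ODE
`β h = r − π h′`, `h 0 = 0`, at rate `C / b`, with `C` and the threshold `b₀` depending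
only on `β, z₀, c` and the bounds `R` and Lipschitz constants `Lr, Lπ` of `r` and `π`. -/
theorem stmt_10 (β z₀ c R Lr Lπ : ℝ) (hβ : 0 ≤ β) (hz₀ : 0 < z₀)
    (hc0 : 0 < c) (hc1 : c ≤ 1) (hR : 0 ≤ R) (hLr : 0 ≤ Lr) (hLπ : 0 ≤ Lπ) :
    ∃ C b₀ : ℝ, ∀ r π : ℝ → ℝ,
      (∀ z, |r z| ≤ R) → (∀ z w, |r z - r w| ≤ Lr * |z - w|) →
      (∀ z, c ≤ π z ∧ π z ≤ 1) → (∀ z w, |π z - π w| ≤ Lπ * |z - w|) →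
      ∀ h h' : ℝ → ℝ, h 0 = 0 →
        (∀ z ∈ Icc 0 z₀, HasDerivWithinAt h (h' z) (Icc 0 z₀) z) →
        (∀ z ∈ Icc 0 z₀, β * h z = r z - π z * h' z) →
        ∀ b : ℝ, b₀ ≤ b → 0 < b →
          ∀ htil : ℝ → ℝ,
            (∀ z, z < 1 / b → htil z = 0) →
            (∀ z, 1 / b ≤ z →
              htil z = (r z / b + (1 - β / b) * π z * htil (z - 1 / b)) /
                (1 - (1 - β / b) * (1 - π z))) →
            ∀ z ∈ Icc 0 z₀, |htil z - h z| ≤ C / b :=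
  stmt_10_general β z₀ c R Lr Lπ hβ hz₀ hc0 hR hLr hLπ
end

section
/- Let σ ∈ (0, 1), let δ ≥ σ·ln(1/σ), and let c ≥ 0. Let ξ_σ : ℝ → ℝ be the logistic function ξ_σ(w) = (1 + e^{−w/σ})^{−1}, with derivative ξ_σ′(w) = (1/σ)·e^{−w/σ}·(1 + e^{−w/σ})^{−2}. Let μ be a probability measure on ℝ such that μ(A) ≤ c·Leb(A) for every Borel set A ⊆ [−δ, δ], where Leb denotes Lebesgue measure. Then ∫ ξ_σ′ dμ ≤ 1 + 2c. -/
open MeasureTheory Set Real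

/-!
Write `ξ_σ(w) = sigmoid (w / σ)`, so that `ξ_σ′(w) = sigmoid (w/σ) · sigmoid (-w/σ) / σ`, and since
`sigmoid x ≤ eˣ` this is at most `e^{-|w|/σ} / σ`. Off `[-δ, δ]` the choice `δ ≥ σ ln(1/σ)` makes
this at most `1`, so the tail contributes at most `μ(ℝ) = 1`. On `[-δ, δ]` the density bound lets
us replace `μ` by `c · Leb`, and `∫_{-δ}^{δ} ξ_σ′ = ξ_σ(δ) - ξ_σ(-δ) ≤ 1`.
-/

namespace MeasureTheory

variable {α : Type*} [MeasurableSpace α] {μ ν : Measure α} {s : Set α} {c : ℝ}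

lemma Measure.restrict_le_smul_restrict_of_forall_le (hs : MeasurableSet s)
    (hμν : ∀ A, MeasurableSet A → A ⊆ s → μ A ≤ ENNReal.ofReal c * ν A) :
    μ.restrict s ≤ ENNReal.ofReal c • ν.restrict s := by
  refine Measure.le_iff.mpr fun A hA => ?_
  rw [Measure.restrict_apply hA, Measure.smul_apply, Measure.restrict_apply hA, smul_eq_mul]
  exact hμν _ (hA.inter hs) inter_subset_right

lemma setIntegral_le_mul_setIntegral_of_forall_le {f : α → ℝ} (hc : 0 ≤ c) (hs : MeasurableSet s)
    (hμν : ∀ A, MeasurableSet A → A ⊆ s → μ A ≤ ENNReal.ofReal c * ν A)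
    (hf : 0 ≤ᵐ[ν.restrict s] f) (hfi : IntegrableOn f s ν) :
    ∫ x in s, f x ∂μ ≤ c * ∫ x in s, f x ∂ν := by
  calc ∫ x in s, f x ∂μ ≤ ∫ x, f x ∂(ENNReal.ofReal c • ν.restrict s) :=
        integral_mono_measure (Measure.restrict_le_smul_restrict_of_forall_le hs hμν)
          (Measure.ae_smul_measure hf _) (hfi.smul_measure ENNReal.ofReal_ne_top)
    _ = c * ∫ x in s, f x ∂ν := by
        rw [integral_smul_measure, ENNReal.toReal_ofReal hc, smul_eq_mul]

lemma setIntegral_le_one_of_le_one [IsZeroOrProbabilityMeasure μ] {f : α → ℝ}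
    (hs : MeasurableSet s) (hf : IntegrableOn f s μ) (h : ∀ x ∈ s, f x ≤ 1) :
    ∫ x in s, f x ∂μ ≤ 1 :=
  calc ∫ x in s, f x ∂μ ≤ ∫ _ in s, (1 : ℝ) ∂μ :=
        setIntegral_mono_on hf (integrableOn_const (measure_ne_top μ s)) hs h
    _ = μ.real s := by simp
    _ ≤ 1 := measureReal_le_one

end MeasureTheory

lemma sigmoid_le_exp (x : ℝ) : sigmoid x ≤ exp x := by
  rw [sigmoid_def, inv_le_iff_one_le_mul₀ (by positivity), mul_add, ← exp_add, add_neg_cancel,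
    exp_zero, mul_one]
  linarith [exp_pos x]

lemma sigmoid_mul_sigmoid_neg_le (x : ℝ) : sigmoid x * sigmoid (-x) ≤ exp (-|x|) := by
  rcases abs_cases x with ⟨hx, -⟩ | ⟨hx, -⟩
  · rw [hx]
    exact mul_le_of_le_one_left (sigmoid_nonneg _) (sigmoid_le_one _) |>.trans (sigmoid_le_exp _)
  · rw [hx, neg_neg]
    exact mul_le_of_le_one_right (sigmoid_nonneg _) (sigmoid_le_one _) |>.trans (sigmoid_le_exp _)

noncomputable def logisticDeriv (σ w : ℝ) : ℝ :=
  1 / σ * exp (-w / σ) * ((1 + exp (-w / σ))⁻¹) ^ 2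

lemma logisticDeriv_eq (σ w : ℝ) :
    logisticDeriv σ w = sigmoid (w / σ) * sigmoid (-(w / σ)) / σ := by
  rw [← sigmoid_mul_rexp_neg, logisticDeriv, sigmoid_def, neg_div]
  ring

lemma hasDerivAt_sigmoid_div (σ w : ℝ) :
    HasDerivAt (fun x => sigmoid (x / σ)) (logisticDeriv σ w) w := by
  refine ((hasDerivAt_sigmoid (w / σ)).comp w ((hasDerivAt_id w).div_const σ)).congr_deriv ?_
  rw [logisticDeriv_eq, ← sigmoid_neg]
  ring

lemma continuous_logisticDeriv (σ : ℝ) : Continuous (logisticDeriv σ) := by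
  simp_rw [funext (logisticDeriv_eq σ)]
  fun_prop

lemma logisticDeriv_nonneg {σ : ℝ} (hσ : 0 ≤ σ) (w : ℝ) : 0 ≤ logisticDeriv σ w := by
  rw [logisticDeriv_eq]
  have := sigmoid_nonneg (w / σ)
  have := sigmoid_nonneg (-(w / σ))
  positivity

lemma logisticDeriv_le_exp_neg_abs {σ : ℝ} (hσ : 0 < σ) (w : ℝ) :
    logisticDeriv σ w ≤ exp (-|w| / σ) / σ := by
  rw [logisticDeriv_eq, neg_div, ← abs_of_pos hσ, ← abs_div, abs_of_pos hσ]
  exact div_le_div_of_nonneg_right (sigmoid_mul_sigmoid_neg_le _) hσ.le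

lemma integrable_logisticDeriv {σ : ℝ} (hσ : 0 < σ) (μ : Measure ℝ) [IsFiniteMeasure μ] :
    Integrable (logisticDeriv σ) μ := by
  refine (integrable_const (1 / σ)).mono' (continuous_logisticDeriv σ).aestronglyMeasurable
    (Filter.Eventually.of_forall fun w => ?_)
  rw [Real.norm_of_nonneg (logisticDeriv_nonneg hσ.le w)]
  calc logisticDeriv σ w ≤ exp (-|w| / σ) / σ := logisticDeriv_le_exp_neg_abs hσ w
    _ ≤ 1 / σ := by
        gcongr
        exact exp_le_one_iff.mpr (div_nonpos_of_nonpos_of_nonneg (by simp) hσ.le)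

lemma logisticDeriv_le_one_of_le_abs {σ δ w : ℝ} (hσ : 0 < σ) (hδ : σ * log (1 / σ) ≤ δ)
    (hw : δ ≤ |w|) :
    logisticDeriv σ w ≤ 1 := by
  have hexp : exp (-|w| / σ) ≤ σ := by
    refine (exp_le_exp.mpr ?_).trans_eq (exp_log hσ)
    rw [div_le_iff₀ hσ]
    rw [one_div, log_inv] at hδ
    linarith
  calc logisticDeriv σ w ≤ exp (-|w| / σ) / σ := logisticDeriv_le_exp_neg_abs hσ w
    _ ≤ 1 := div_le_one_of_le₀ hexp hσ.le

lemma setIntegral_Icc_logisticDeriv_le_one (σ a b : ℝ) :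
    ∫ w in Icc a b, logisticDeriv σ w ≤ 1 := by
  rcases le_or_gt a b with hab | hab
  · rw [integral_Icc_eq_integral_Ioc, ← intervalIntegral.integral_of_le hab,
      intervalIntegral.integral_eq_sub_of_hasDerivAt (fun w _ => hasDerivAt_sigmoid_div σ w)
        ((continuous_logisticDeriv σ).intervalIntegrable _ _)]
    linarith [sigmoid_le_one (b / σ), sigmoid_nonneg (a / σ)]
  · simp [Icc_eq_empty_of_lt hab]

/-- The integral bound from Appendix B.1: for the logistic function
`ξ_σ(w) = (1 + e^{−w/σ})⁻¹` with `σ ∈ (0,1)`, `δ ≥ σ ln(1/σ)`, and a probability measure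
`μ` whose restriction to `[−δ, δ]` has density bounded by `c` with respect to Lebesgue
measure, one has `∫ ξ_σ′ dμ ≤ 1 + 2c`. -/
theorem stmt_17 (σ δ c : ℝ) (hσ : σ ∈ Ioo (0 : ℝ) 1) (hδ : σ * Real.log (1 / σ) ≤ δ)
    (hc : 0 ≤ c) (μ : Measure ℝ) [IsProbabilityMeasure μ]
    (hμ : ∀ A : Set ℝ, MeasurableSet A → A ⊆ Icc (-δ) δ →
      μ A ≤ ENNReal.ofReal c * volume A) :
    ∫ w, (1 / σ) * Real.exp (-w / σ) * ((1 + Real.exp (-w / σ))⁻¹) ^ 2 ∂μ ≤ 1 + 2 * c := by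
  change ∫ w, logisticDeriv σ w ∂μ ≤ 1 + 2 * c
  have hσ0 : 0 < σ := hσ.1
  have hint := integrable_logisticDeriv hσ0 μ
  have hcore : ∫ w in Icc (-δ) δ, logisticDeriv σ w ∂μ ≤ c :=
    (setIntegral_le_mul_setIntegral_of_forall_le hc measurableSet_Icc hμ
      (Filter.Eventually.of_forall (logisticDeriv_nonneg hσ0.le))
      (continuous_logisticDeriv σ).integrableOn_Icc).trans
      (mul_le_of_le_one_right hc (setIntegral_Icc_logisticDeriv_le_one σ _ _))
  have htail : ∫ w in (Icc (-δ) δ)ᶜ, logisticDeriv σ w ∂μ ≤ 1 := by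
    refine setIntegral_le_one_of_le_one measurableSet_Icc.compl hint.integrableOn fun w hw => ?_
    rw [mem_compl_iff, mem_Icc, ← abs_le, not_le] at hw
    exact logisticDeriv_le_one_of_le_abs hσ0 hδ hw.le
  rw [← integral_add_compl measurableSet_Icc hint]
  linarith
end
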